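/- arXiv:1508.02940 — 11 statements merged into one kernel-verified Lean document; each statement's English description precedes it below -/
import Mathlib

section
/- Let A ∈ ℤ^{m×n} admit an affine TU decomposition A = Ã + UW, where W ∈ {0,±1}^{k×n}, U ∈ ℤ^{m×k}, and the stacked (m+k)×n matrix [Ã; W] is totally unimodular. Then for every b ∈ ℤ^m, every ℓ ∈ ℤ^n and u ∈ ℤ^n with ℓ ≤ u, the set conv({x ∈ ℝ^n : ℓ ≤ x ≤ u, Ax ≤ b, Wx ∈ ℤ^k}) is an integral polytope, i.e., it equals the convex hull of its integer points. In particular P = {x ∈ ℝ^n : ℓ ≤ x ≤ u, Ax ≤ b} satisfies conv(P ∩ ℤ^n) = conv({x ∈ P : Wx ∈ ℤ^k}). -/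
/-!
Fix `x` with `ℓ ≤ x ≤ u`, `A x ≤ b` and `w := W x ∈ ℤᵏ`. On the fiber `W y = w` the constraint
`A y ≤ b` reads `(A - U W) y ≤ b - U w`, so the fiber polytope
`{y | ℓ ≤ y ≤ u, (A - U W) y ≤ b - U w, W y = w}` is described by the rows of `[A - U W; W]`,
unit rows and negated rows, a totally unimodular system with integral right-hand side. A vertex
of such a polytope is the unique solution of a nonsingular square tight subsystem, whose inverse
is integral because its determinant is `±1`; hence by Krein–Milman `x` is a convex combination
of integer points of the fiber, and these lie in `P ∩ ℤⁿ`.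
-/

open Matrix Set

/-- A point of `ℝⁿ` is integral if all its coordinates are integers. -/
def IsIntegerPoint {n : ℕ} (x : Fin n → ℝ) : Prop := ∀ i, ∃ z : ℤ, x i = (z : ℝ)

open Filter Topology Bornology

theorem Bornology.IsBounded.finite_integral {σ : Type*} [Fintype σ] {P : Set (σ → ℝ)}
    (hP : IsBounded P) :
    {x ∈ P | ∀ j, ∃ z : ℤ, x j = z}.Finite := by
  classical
  obtain ⟨a, ha⟩ := hP.bddBelow
  obtain ⟨b, hb⟩ := hP.bddAbove
  refine ((finite_Icc (fun j => ⌈a j⌉) (fun j => ⌊b j⌋)).image fun z j => (z j : ℝ)).subset ?_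
  rintro x ⟨hxP, hx⟩
  choose z hz using hx
  refine ⟨z, ⟨fun j => Int.ceil_le.2 ?_, fun j => Int.le_floor.2 ?_⟩, funext fun j => (hz j).symm⟩
  · exact hz j ▸ ha hxP j
  · exact hz j ▸ hb hxP j

namespace Matrix

section TotallyUnimodular

variable {m m' n R : Type*} [CommRing R]

theorem IsTotallyUnimodular.signType_smul_rows {A : Matrix m n R}
    (hA : A.IsTotallyUnimodular) (s : m → SignType) :
    (Matrix.of fun i => (s i : R) • A i).IsTotallyUnimodular := by
  rw [isTotallyUnimodular_iff] at hA ⊢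
  intro k f g
  obtain ⟨t, ht⟩ := hA k f g
  refine ⟨(∏ i, s (f i)) * t, ?_⟩
  have hprod : ((∏ i, s (f i) : SignType) : R) = ∏ i, (s (f i) : R) :=
    map_prod (SignType.castHom : SignType →*₀ R) _ _
  have hsub : (of fun i => (s i : R) • A i).submatrix f g =
      of fun a b => (s (f a) : R) * A.submatrix f g a b := rfl
  rw [hsub, det_mul_column, SignType.coe_mul, hprod, ht]

theorem IsTotallyUnimodular.fromRows_neg_submatrix {A : Matrix m n R}
    (hA : A.IsTotallyUnimodular) (φ : m' → m) :
    (fromRows A (-A.submatrix φ id)).IsTotallyUnimodular := by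
  have hsigned : fromRows A (-A.submatrix φ id) =
      Matrix.of fun i =>
        ((Sum.elim 1 (-1) i : SignType) : R) • A.submatrix (Sum.elim id φ) id i := by
    ext (i | i) j <;> simp
  rw [hsigned]
  exact (hA.submatrix _ _).signType_smul_rows _

end TotallyUnimodular

section Polytope

variable {ι σ : Type*} [Fintype σ]

theorem map_intCast_mulVec (M : Matrix ι σ ℤ) (v : σ → ℤ) :
    (M.map (Int.cast : ℤ → ℝ) *ᵥ fun j => (v j : ℝ)) = fun i => ((M *ᵥ v) i : ℝ) :=
  funext fun i => (RingHom.map_mulVec (Int.castRingHom ℝ) M v i).symm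

theorem map_intCast_mulVec_integral (M : Matrix ι σ ℤ)
    {x : σ → ℝ} (hx : ∀ j, ∃ z : ℤ, x j = z) :
    ∀ i, ∃ z : ℤ, (M.map (Int.cast : ℤ → ℝ) *ᵥ x) i = z := by
  choose z hz using hx
  obtain rfl : x = fun j => (z j : ℝ) := funext hz
  exact fun i => ⟨(M *ᵥ z) i, by rw [map_intCast_mulVec]⟩

theorem map_intCast_sub_mul_mulVec {κ : Type*} [Fintype κ] (A : Matrix ι σ ℤ)
    (U : Matrix ι κ ℤ) {W : Matrix κ σ ℤ} {w : κ → ℤ} {y : σ → ℝ}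
    (hy : W.map (Int.cast : ℤ → ℝ) *ᵥ y = fun j => (w j : ℝ)) :
    (A - U * W).map (Int.cast : ℤ → ℝ) *ᵥ y =
      A.map (Int.cast : ℤ → ℝ) *ᵥ y - fun i => ((U *ᵥ w) i : ℝ) := by
  have hmul : (U * W).map (Int.cast : ℤ → ℝ) =
      (U.map (Int.cast : ℤ → ℝ) * W.map (Int.cast : ℤ → ℝ) : Matrix ι σ ℝ) :=
    Matrix.map_mul (f := Int.castRingHom ℝ)
  rw [Matrix.map_sub _ Int.cast_sub, hmul, sub_mulVec, ← mulVec_mulVec, hy, map_intCast_mulVec]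

theorem exists_det_submatrix_ne_zero [Finite ι] [DecidableEq σ] {K : Type*} [Field K]
    {M : Matrix ι σ K} (hM : Function.Injective M.mulVec) :
    ∃ g : σ → ι, (M.submatrix g id).det ≠ 0 := by
  have hrank : Module.finrank K (Submodule.span K (range M.row)) = Fintype.card σ := by
    rw [← rank_eq_finrank_span_row, rank, LinearMap.finrank_range_of_inj hM,
      Module.finrank_fintype_fun_eq_card]
  obtain ⟨κ, a, ha, hspan, hli⟩ := exists_linearIndependent' K M.row
  have : Finite κ := Finite.of_injective a ha
  cases nonempty_fintype κ
  have hcard : Fintype.card σ = Fintype.card κ := by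
    rw [linearIndependent_iff_card_eq_finrank_span.mp hli, Set.finrank, hspan, hrank]
  let e := Fintype.equivOfCardEq hcard
  refine ⟨a ∘ e, ?_⟩
  rw [← isUnit_iff_ne_zero, ← isUnit_iff_isUnit_det, ← linearIndependent_rows_iff_isUnit]
  exact hli.comp e e.injective

theorem injective_tight_mulVec_of_mem_extremePoints [Finite ι] {M : Matrix ι σ ℝ} {c : ι → ℝ}
    {x : σ → ℝ} (hx : x ∈ {y | M *ᵥ y ≤ c}.extremePoints ℝ) :
    Function.Injective
      (M.submatrix (Subtype.val : {i // (M *ᵥ x) i = c i} → ι) id).mulVec := by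
  refine (injective_iff_map_eq_zero (M.submatrix _ id).mulVecLin).2 fun d hd => ?_
  have hd_tight : ∀ i, (M *ᵥ x) i = c i → (M *ᵥ d) i = 0 := fun i hi => congrFun hd ⟨i, hi⟩
  have hline : ∀ t : ℝ, M *ᵥ (x + t • d) = M *ᵥ x + t • M *ᵥ d := fun t => by
    rw [mulVec_add, mulVec_smul]
  have hnear : ∀ᶠ t in 𝓝 (0 : ℝ), M *ᵥ (x + t • d) ≤ c := by
    simp only [Pi.le_def, hline, Pi.add_apply, Pi.smul_apply, smul_eq_mul, eventually_all]
    intro i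
    by_cases hi : (M *ᵥ x) i = c i
    · simp [hd_tight i hi, hi]
    · have hcont : Continuous fun t : ℝ => (M *ᵥ x) i + t * (M *ᵥ d) i := by fun_prop
      refine (hcont.tendsto' 0 _ (by simp)).eventually_lt_const (lt_of_le_of_ne (hx.1 i) hi)
        |>.mono fun t ht => ht.le
  have hnear_both : ∀ᶠ t in 𝓝[≠] (0 : ℝ),
      (M *ᵥ (x + t • d) ≤ c ∧ M *ᵥ (x + (-t) • d) ≤ c) ∧ t ≠ 0 :=
    ((hnear.and ((continuous_neg.tendsto' 0 0 neg_zero).eventually hnear)).filter_mono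
      nhdsWithin_le_nhds).and self_mem_nhdsWithin
  obtain ⟨t, ⟨hplus, hminus⟩, ht⟩ := hnear_both.exists
  have hmid : x ∈ openSegment ℝ (x + t • d) (x + (-t) • d) :=
    ⟨1 / 2, 1 / 2, by norm_num, by norm_num, by norm_num, by module⟩
  have htd : t • d = 0 := by
    simpa using (mem_extremePoints.1 hx).2 _ hplus _ hminus hmid |>.1
  exact (smul_eq_zero.1 htd).resolve_left ht

namespace IsTotallyUnimodular

variable [Finite ι] {M : Matrix ι σ ℤ}

theorem integral_of_mem_extremePoints (hM : M.IsTotallyUnimodular) (c : ι → ℤ) {x : σ → ℝ}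
    (hx : x ∈ {y | M.map (Int.cast : ℤ → ℝ) *ᵥ y ≤ fun i => (c i : ℝ)}.extremePoints ℝ) :
    ∀ j, ∃ z : ℤ, x j = z := by
  classical
  obtain ⟨g, hg⟩ := exists_det_submatrix_ne_zero (injective_tight_mulVec_of_mem_extremePoints hx)
  set B : Matrix σ σ ℤ := M.submatrix (Subtype.val ∘ g) id
  have hB0 : B.det ≠ 0 := by
    have hcast : ((B.det : ℤ) : ℝ) = (B.map (Int.cast : ℤ → ℝ)).det :=
      RingHom.map_det (Int.castRingHom ℝ) B
    exact_mod_cast hcast ▸ hg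
  have hBunit : IsUnit B.det := by
    obtain ⟨s, hs⟩ := (isTotallyUnimodular_iff_fintype M).1 hM σ (Subtype.val ∘ g) id
    rw [← hs] at hB0 ⊢
    cases s <;> simp at hB0 ⊢
  set z : σ → ℤ := B⁻¹ *ᵥ fun j => c (g j)
  have hBz : B *ᵥ z = fun j => c (g j) := by
    rw [mulVec_mulVec, mul_nonsing_inv B hBunit, one_mulVec]
  have hBx :
      B.map (Int.cast : ℤ → ℝ) *ᵥ x = B.map (Int.cast : ℤ → ℝ) *ᵥ fun j => (z j : ℝ) := by
    rw [map_intCast_mulVec, hBz]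
    exact funext fun j => (g j).2
  have hBinj : Function.Injective (B.map (Int.cast : ℤ → ℝ)).mulVec :=
    mulVec_injective_iff_isUnit.2 <| (isUnit_iff_isUnit_det _).2 <| isUnit_iff_ne_zero.2 hg
  exact fun j => ⟨z j, congrFun (hBinj hBx) j⟩

theorem subset_convexHull_integral (hM : M.IsTotallyUnimodular) (c : ι → ℤ)
    (hP : IsBounded {y | M.map (Int.cast : ℤ → ℝ) *ᵥ y ≤ fun i => (c i : ℝ)}) :
    {y | M.map (Int.cast : ℤ → ℝ) *ᵥ y ≤ fun i => (c i : ℝ)} ⊆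
      convexHull ℝ
        {y | M.map (Int.cast : ℤ → ℝ) *ᵥ y ≤ (fun i => (c i : ℝ)) ∧ ∀ j, ∃ z : ℤ, y j = z} := by
  set P := {y | M.map (Int.cast : ℤ → ℝ) *ᵥ y ≤ fun i => (c i : ℝ)}
  have hconv : Convex ℝ P := (convex_Iic _).linear_preimage (M.map (Int.cast : ℤ → ℝ)).mulVecLin
  have hclosed : IsClosed P := isClosed_le (by fun_prop) continuous_const
  have hext : P.extremePoints ℝ ⊆ {y ∈ P | ∀ j, ∃ z : ℤ, y j = z} :=
    fun y hy => ⟨hy.1, hM.integral_of_mem_extremePoints c hy⟩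
  calc P = closure (convexHull ℝ (P.extremePoints ℝ)) :=
        (closure_convexHull_extremePoints (Metric.isCompact_of_isClosed_isBounded hclosed hP)
          hconv).symm
    _ ⊆ _ := closure_minimal (convexHull_mono hext)
        (hP.finite_integral.isClosed_convexHull ℝ)

end IsTotallyUnimodular

end Polytope

section AffineTU

variable {ι κ σ : Type*} [Fintype κ] [DecidableEq σ]

def affineFiberMatrix (A : Matrix ι σ ℤ) (U : Matrix ι κ ℤ) (W : Matrix κ σ ℤ) :
    Matrix (((ι ⊕ κ) ⊕ σ) ⊕ (κ ⊕ σ)) σ ℤ :=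
  fromRows (fromRows (fromRows (A - U * W) W) 1) (-fromRows W 1)

def affineFiberBound (U : Matrix ι κ ℤ) (b : ι → ℤ) (ℓ u : σ → ℤ) (w : κ → ℤ) :
    ((ι ⊕ κ) ⊕ σ) ⊕ (κ ⊕ σ) → ℤ :=
  Sum.elim (Sum.elim (Sum.elim (b - U *ᵥ w) w) u) (Sum.elim (-w) (-ℓ))

theorem affineFiberMatrix_isTotallyUnimodular {A : Matrix ι σ ℤ} {U : Matrix ι κ ℤ}
    {W : Matrix κ σ ℤ} (hTU : (fromRows (A - U * W) W).IsTotallyUnimodular) :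
    (affineFiberMatrix A U W).IsTotallyUnimodular := by
  have hrows : fromRows W 1 = (fromRows (fromRows (A - U * W) W) (1 : Matrix σ σ ℤ)).submatrix
      (Sum.elim (Sum.inl ∘ Sum.inr) Sum.inr) id := by
    ext (j | j) l <;> rfl
  rw [affineFiberMatrix, hrows]
  exact ((fromRows_one_isTotallyUnimodular_iff _).2 hTU).fromRows_neg_submatrix _

variable [Fintype σ]

theorem mulVec_le_affineFiberBound_iff (A : Matrix ι σ ℤ) (U : Matrix ι κ ℤ) (W : Matrix κ σ ℤ)
    (b : ι → ℤ) (ℓ u : σ → ℤ) (w : κ → ℤ) (y : σ → ℝ) :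
    (affineFiberMatrix A U W).map (Int.cast : ℤ → ℝ) *ᵥ y ≤
        (fun i => (affineFiberBound U b ℓ u w i : ℝ)) ↔
      (∀ j, (ℓ j : ℝ) ≤ y j ∧ y j ≤ u j) ∧
        (∀ i, (A.map (Int.cast : ℤ → ℝ) *ᵥ y) i ≤ b i) ∧
        W.map (Int.cast : ℤ → ℝ) *ᵥ y = fun j => (w j : ℝ) := by
  have hsystem : (affineFiberMatrix A U W).map (Int.cast : ℤ → ℝ) *ᵥ y ≤
        (fun i => (affineFiberBound U b ℓ u w i : ℝ)) ↔
      (∀ j, (ℓ j : ℝ) ≤ y j ∧ y j ≤ u j) ∧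
        (∀ i, ((A - U * W).map (Int.cast : ℤ → ℝ) *ᵥ y) i ≤ (b - U *ᵥ w) i) ∧
        W.map (Int.cast : ℤ → ℝ) *ᵥ y = fun j => (w j : ℝ) := by
    simp only [affineFiberMatrix, affineFiberBound, fromRows_map,
      Matrix.map_neg (Int.cast : ℤ → ℝ) Int.cast_neg, Matrix.map_one _ Int.cast_zero Int.cast_one,
      Pi.le_def, Sum.forall, neg_mulVec, fromRows_mulVec, one_mulVec, Sum.elim_inl, Sum.elim_inr,
      Pi.neg_apply, Int.cast_neg, neg_le_neg_iff, le_antisymm_iff, forall_and]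
    tauto
  rw [hsystem]
  refine and_congr_right fun _ =>
    ⟨fun ⟨hA, hW⟩ => ⟨fun i => ?_, hW⟩, fun ⟨hA, hW⟩ => ⟨fun i => ?_, hW⟩⟩ <;>
    simpa [map_intCast_sub_mul_mulVec A U hW] using hA i

theorem subset_convexHull_integral_of_affineTU [Fintype ι] {A : Matrix ι σ ℤ}
    {U : Matrix ι κ ℤ} {W : Matrix κ σ ℤ} (hTU : (fromRows (A - U * W) W).IsTotallyUnimodular)
    (b : ι → ℤ) (ℓ u : σ → ℤ) :
    {x : σ → ℝ | (∀ i, (ℓ i : ℝ) ≤ x i ∧ x i ≤ (u i : ℝ)) ∧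
        (∀ i, (A.map (Int.cast : ℤ → ℝ)).mulVec x i ≤ (b i : ℝ)) ∧
        (∀ j, ∃ z : ℤ, (W.map (Int.cast : ℤ → ℝ)).mulVec x j = (z : ℝ))} ⊆
      convexHull ℝ {x : σ → ℝ | (∀ i, (ℓ i : ℝ) ≤ x i ∧ x i ≤ (u i : ℝ)) ∧
        (∀ i, (A.map (Int.cast : ℤ → ℝ)).mulVec x i ≤ (b i : ℝ)) ∧
        (∀ i, ∃ z : ℤ, x i = (z : ℝ))} := by
  rintro x ⟨hbox, hAx, hWx⟩
  choose w hw using hWx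
  have hfiber := mulVec_le_affineFiberBound_iff A U W b ℓ u w
  have hbdd : IsBounded {y | (affineFiberMatrix A U W).map (Int.cast : ℤ → ℝ) *ᵥ y ≤
      fun i => (affineFiberBound U b ℓ u w i : ℝ)} :=
    (Metric.isBounded_Icc (fun j => (ℓ j : ℝ)) fun j => (u j : ℝ)).subset fun y hy =>
      ⟨fun j => (((hfiber y).1 hy).1 j).1, fun j => (((hfiber y).1 hy).1 j).2⟩
  refine convexHull_mono ?_ <|
    (affineFiberMatrix_isTotallyUnimodular hTU).subset_convexHull_integral _ hbdd <|
      (hfiber x).2 ⟨hbox, hAx, funext hw⟩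
  rintro y ⟨hy, hyint⟩
  exact ⟨((hfiber y).1 hy).1, ((hfiber y).1 hy).2.1, hyint⟩

end AffineTU

end Matrix

theorem affine_TU_decomposition_integral_hull_general
    {m n k : ℕ} (A : Matrix (Fin m) (Fin n) ℤ) (U : Matrix (Fin m) (Fin k) ℤ)
    (W : Matrix (Fin k) (Fin n) ℤ)
    (hTU : (Matrix.fromRows (A - U * W) W).IsTotallyUnimodular)
    (b : Fin m → ℤ) (ℓ u : Fin n → ℤ) :
    (convexHull ℝ {x : Fin n → ℝ |
        (∀ i, (ℓ i : ℝ) ≤ x i ∧ x i ≤ (u i : ℝ)) ∧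
        (∀ i, (A.map (Int.cast : ℤ → ℝ)).mulVec x i ≤ (b i : ℝ)) ∧
        (∀ j, ∃ z : ℤ, (W.map (Int.cast : ℤ → ℝ)).mulVec x j = (z : ℝ))}
      = convexHull ℝ ((convexHull ℝ {x : Fin n → ℝ |
        (∀ i, (ℓ i : ℝ) ≤ x i ∧ x i ≤ (u i : ℝ)) ∧
        (∀ i, (A.map (Int.cast : ℤ → ℝ)).mulVec x i ≤ (b i : ℝ)) ∧
        (∀ j, ∃ z : ℤ, (W.map (Int.cast : ℤ → ℝ)).mulVec x j = (z : ℝ))})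
          ∩ {x | IsIntegerPoint x}))
    ∧
    (convexHull ℝ {x : Fin n → ℝ |
        (∀ i, (ℓ i : ℝ) ≤ x i ∧ x i ≤ (u i : ℝ)) ∧
        (∀ i, (A.map (Int.cast : ℤ → ℝ)).mulVec x i ≤ (b i : ℝ)) ∧
        IsIntegerPoint x}
      = convexHull ℝ {x : Fin n → ℝ |
        (∀ i, (ℓ i : ℝ) ≤ x i ∧ x i ≤ (u i : ℝ)) ∧
        (∀ i, (A.map (Int.cast : ℤ → ℝ)).mulVec x i ≤ (b i : ℝ)) ∧
        (∀ j, ∃ z : ℤ, (W.map (Int.cast : ℤ → ℝ)).mulVec x j = (z : ℝ))}) := by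
  set S := {x : Fin n → ℝ | (∀ i, (ℓ i : ℝ) ≤ x i ∧ x i ≤ (u i : ℝ)) ∧
    (∀ i, (A.map (Int.cast : ℤ → ℝ)).mulVec x i ≤ (b i : ℝ)) ∧
    (∀ j, ∃ z : ℤ, (W.map (Int.cast : ℤ → ℝ)).mulVec x j = (z : ℝ))}
  set T := {x : Fin n → ℝ | (∀ i, (ℓ i : ℝ) ≤ x i ∧ x i ≤ (u i : ℝ)) ∧
    (∀ i, (A.map (Int.cast : ℤ → ℝ)).mulVec x i ≤ (b i : ℝ)) ∧ IsIntegerPoint x}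
  have hTS : T ⊆ S := fun x ⟨hbox, hAx, hx⟩ => ⟨hbox, hAx, W.map_intCast_mulVec_integral hx⟩
  have hST : S ⊆ convexHull ℝ T := subset_convexHull_integral_of_affineTU hTU b ℓ u
  have hhull : convexHull ℝ T = convexHull ℝ S :=
    (convexHull_mono hTS).antisymm (convexHull_min hST (convex_convexHull ℝ T))
  refine ⟨subset_antisymm ?_ (convexHull_min inter_subset_left (convex_convexHull ℝ S)), hhull⟩
  calc convexHull ℝ S = convexHull ℝ T := hhull.symm
    _ ⊆ convexHull ℝ (convexHull ℝ S ∩ {x | IsIntegerPoint x}) :=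
      convexHull_mono fun x hx => ⟨subset_convexHull ℝ S (hTS hx), hx.2.2⟩

/-- **Affine TU decompositions yield mixed integer descriptions of integer hulls.**
If `A = Ã + U W` is an affine TU decomposition (i.e. `Ã = A - U W` stacked on top of `W`
is totally unimodular, `W` has entries in `{0, ±1}`), then for all integral `b, ℓ, u` with
`ℓ ≤ u`, the set `conv {x | ℓ ≤ x ≤ u, A x ≤ b, W x ∈ ℤᵏ}` is an integral polytope,
and in particular `P = {x | ℓ ≤ x ≤ u, A x ≤ b}` satisfies
`conv (P ∩ ℤⁿ) = conv {x ∈ P | W x ∈ ℤᵏ}`. -/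
theorem affine_TU_decomposition_integral_hull
    {m n k : ℕ} (A : Matrix (Fin m) (Fin n) ℤ) (U : Matrix (Fin m) (Fin k) ℤ)
    (W : Matrix (Fin k) (Fin n) ℤ)
    (hW : ∀ i j, W i j ∈ ({-1, 0, 1} : Set ℤ))
    (hTU : (Matrix.fromRows (A - U * W) W).IsTotallyUnimodular)
    (b : Fin m → ℤ) (ℓ u : Fin n → ℤ) (hℓu : ∀ i, ℓ i ≤ u i) :
    (convexHull ℝ {x : Fin n → ℝ |
        (∀ i, (ℓ i : ℝ) ≤ x i ∧ x i ≤ (u i : ℝ)) ∧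
        (∀ i, (A.map (Int.cast : ℤ → ℝ)).mulVec x i ≤ (b i : ℝ)) ∧
        (∀ j, ∃ z : ℤ, (W.map (Int.cast : ℤ → ℝ)).mulVec x j = (z : ℝ))}
      = convexHull ℝ ((convexHull ℝ {x : Fin n → ℝ |
        (∀ i, (ℓ i : ℝ) ≤ x i ∧ x i ≤ (u i : ℝ)) ∧
        (∀ i, (A.map (Int.cast : ℤ → ℝ)).mulVec x i ≤ (b i : ℝ)) ∧
        (∀ j, ∃ z : ℤ, (W.map (Int.cast : ℤ → ℝ)).mulVec x j = (z : ℝ))})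
          ∩ {x | IsIntegerPoint x}))
    ∧
    (convexHull ℝ {x : Fin n → ℝ |
        (∀ i, (ℓ i : ℝ) ≤ x i ∧ x i ≤ (u i : ℝ)) ∧
        (∀ i, (A.map (Int.cast : ℤ → ℝ)).mulVec x i ≤ (b i : ℝ)) ∧
        IsIntegerPoint x}
      = convexHull ℝ {x : Fin n → ℝ |
        (∀ i, (ℓ i : ℝ) ≤ x i ∧ x i ≤ (u i : ℝ)) ∧
        (∀ i, (A.map (Int.cast : ℤ → ℝ)).mulVec x i ≤ (b i : ℝ)) ∧
        (∀ j, ∃ z : ℤ, (W.map (Int.cast : ℤ → ℝ)).mulVec x j = (z : ℝ))}) :=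
  affine_TU_decomposition_integral_hull_general A U W hTU b ℓ u
end

section
/- Let A ∈ ℤ^{m×n}, U ∈ ℤ^{m×k}, and W ∈ {0,±1}^{k×n} be such that A = Ã + UW with [Ã; W] totally unimodular, and suppose W has rank k' < k. Then A admits a k'-row affine TU decomposition: there exists a subset I ⊆ {1,…,k} with |I| = k' such that the rows of W indexed by I have rank k', and an integer matrix R ∈ ℤ^{(k−k')×k'} with W_{I^c} = R·W_I, so that A = Ã + (U_I + U_{I^c}·R)·W_I is an affine TU decomposition with k' rows (where U_I, U_{I^c} denote the columns of U indexed by I and its complement). -/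
/-!
Pick rows `I` of `W` forming a basis of its row space over `ℚ`, so that `W_{Iᶜ} = Q W_I` for a
rational `Q`. Since `W_I` has full row rank it contains a nonsingular square submatrix `B`, and
total unimodularity of `W` forces `det B = ±1`; comparing the columns of `B` shows
`Q = W_{Iᶜ, cols B} B⁻¹`, which is integral. The new decomposition is a regrouping of
`U W = U_I W_I + U_{Iᶜ} W_{Iᶜ}`, and `[Ã; W_I]` is a row submatrix of `[Ã; W]`.
-/

open Matrix Set

namespace Matrix

variable {m n ι R K : Type*}

theorem exists_linearIndependent_rows_eq_mul_submatrix [Field K] [Fintype m] [Fintype n]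
    (M : Matrix m n K) :
    ∃ I : Finset m, I.card = M.rank ∧
      LinearIndependent K (M.submatrix ((↑) : I → m) id).row ∧
      ∃ Q : Matrix m I K, M = Q * M.submatrix ((↑) : I → m) id := by
  obtain ⟨I, -, -, hspan, hli⟩ :=
    exists_linearIndepOn_extension (v := M.row) (linearIndepOn_empty K _) (empty_subset univ)
  lift I to Finset m using I.toFinite
  have hrow : ∀ i, M i ∈ LinearMap.range (M.submatrix ((↑) : I → m) id).vecMulLinear := by
    intro i
    rw [range_vecMulLinear]
    exact image_eq_range M.row I ▸ hspan ⟨i, mem_univ i, rfl⟩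
  choose Q hQ using hrow
  have hM : M = of Q * M.submatrix ((↑) : I → m) id := funext fun i => (hQ i).symm
  replace hli : LinearIndependent K (M.submatrix ((↑) : I → m) id).row := hli
  have hrank : (M.submatrix ((↑) : I → m) id).rank = I.card := by
    rw [hli.rank_matrix, Fintype.card_coe]
  refine ⟨I, le_antisymm ?_ ?_, hli, of Q, hM⟩
  · exact hrank ▸ rank_submatrix_le M _ _
  · calc M.rank = (of Q * M.submatrix ((↑) : I → m) id).rank := congrArg rank hM
      _ ≤ I.card := (rank_mul_le_right _ _).trans hrank.le

theorem exists_det_submatrix_ne_zero_s1 [Field K] [Fintype m] [DecidableEq m] [Fintype n]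
    {N : Matrix m n K} (hN : LinearIndependent K N.row) :
    ∃ g : m → n, (N.submatrix id g).det ≠ 0 := by
  obtain ⟨J, hJ, hli, -⟩ := Nᵀ.exists_linearIndependent_rows_eq_mul_submatrix
  rw [rank_transpose, hN.rank_matrix, ← Fintype.card_coe] at hJ
  let e : m ≃ J := Fintype.equivOfCardEq hJ.symm
  refine ⟨(↑) ∘ e, fun h => ?_⟩
  have hcols : LinearIndependent K (N.submatrix id ((↑) ∘ e)).col := hli.comp e e.injective
  exact (isUnit_iff_isUnit_det _).mp (linearIndependent_cols_iff_isUnit.mp hcols) |>.ne_zero h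

theorem IsTotallyUnimodular.isUnit_det_submatrix [CommRing R] [Fintype ι] [DecidableEq ι]
    {A : Matrix m n R} (hA : A.IsTotallyUnimodular) {f : ι → m} {g : ι → n}
    (hdet : (A.submatrix f g).det ≠ 0) : IsUnit (A.submatrix f g).det := by
  obtain ⟨s, hs⟩ := (isTotallyUnimodular_iff_fintype A).mp hA ι f g
  rw [← hs] at hdet ⊢
  rcases s with _ | _ | _ <;> simp at hdet ⊢

theorem IsTotallyUnimodular.fromRows_submatrix_right {m' : Type*} [CommRing R]
    {A : Matrix m n R} {B : Matrix m' n R} (h : (fromRows A B).IsTotallyUnimodular)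
    (r : ι → m') : (fromRows A (B.submatrix r id)).IsTotallyUnimodular := by
  convert h.submatrix (Sum.map id r) id using 1
  ext (i | i) j <;> rfl

theorem mul_eq_add_mul_submatrix_compl [NonUnitalNonAssocSemiring R] [Fintype ι]
    [DecidableEq ι] (I : Finset ι) (U : Matrix m ι R) (W : Matrix ι n R) :
    U * W = U.submatrix id ((↑) : {i // i ∈ I} → ι) * W.submatrix ((↑) : {i // i ∈ I} → ι) id
      + U.submatrix id ((↑) : {i // i ∉ I} → ι) * W.submatrix ((↑) : {i // i ∉ I} → ι) id := by
  ext a j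
  simp only [mul_apply, add_apply, submatrix_apply, id_eq]
  convert (Fintype.sum_subtype_add_sum_subtype (· ∈ I) fun i => U a i * W i j).symm

theorem eq_submatrix_mul_inv_mul_of_map_eq_mul {S α β : Type*} [CommRing R] [CommRing S]
    [Fintype β] [DecidableEq β] [Fintype n] (f : R →+* S) (hf : Function.Injective f)
    {X : Matrix α n R} {Y : Matrix β n R} {g : β → n} (hY : IsUnit (Y.submatrix id g).det)
    {Q : Matrix α β S} (hXY : X.map f = Q * Y.map f) :
    X = X.submatrix id g * (Y.submatrix id g)⁻¹ * Y := by
  set B := Y.submatrix id g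
  set P := X.submatrix id g * B⁻¹
  have hPB : P * B = X.submatrix id g := nonsing_inv_mul_cancel_right _ _ hY
  have hBS : IsUnit (B.map f).det := by
    have := hY.map f
    rwa [RingHom.map_det] at this
  have hQ : Q = P.map f := by
    have : Q * B.map f = P.map f * B.map f := by
      rw [← Matrix.map_mul, hPB]
      exact (congrArg (submatrix · id g) hXY).symm
    rw [← mul_nonsing_inv_cancel_right (B.map f) Q hBS, this, mul_nonsing_inv_cancel_right _ _ hBS]
  refine map_injective hf ?_
  dsimp only
  rw [hXY, hQ, ← Matrix.map_mul]

end Matrix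

theorem affine_TU_decomposition_reduce_to_full_rank_general
    {m n k : ℕ} (A : Matrix (Fin m) (Fin n) ℤ) (U : Matrix (Fin m) (Fin k) ℤ)
    (W : Matrix (Fin k) (Fin n) ℤ) (k' : ℕ)
    (hTU : (Matrix.fromRows (A - U * W) W).IsTotallyUnimodular)
    (hrank : (W.map (Int.cast : ℤ → ℚ)).rank = k') :
    ∃ (I : Finset (Fin k)) (R : Matrix {i // i ∉ I} {i // i ∈ I} ℤ),
      I.card = k' ∧
      ((W.submatrix (fun i : {i // i ∈ I} => (i : Fin k)) id).map
        (Int.cast : ℤ → ℚ)).rank = k' ∧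
      W.submatrix (fun i : {i // i ∉ I} => (i : Fin k)) id
        = R * W.submatrix (fun i : {i // i ∈ I} => (i : Fin k)) id ∧
      A = (A - U * W)
          + (U.submatrix id (fun i : {i // i ∈ I} => (i : Fin k))
              + U.submatrix id (fun i : {i // i ∉ I} => (i : Fin k)) * R)
            * W.submatrix (fun i : {i // i ∈ I} => (i : Fin k)) id ∧
      (Matrix.fromRows (A - U * W)
        (W.submatrix (fun i : {i // i ∈ I} => (i : Fin k)) id)).IsTotallyUnimodular := by
  obtain ⟨I, hcard, hli, Q, hQ⟩ :=
    (W.map (Int.cast : ℤ → ℚ)).exists_linearIndependent_rows_eq_mul_submatrix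
  obtain ⟨g, hg⟩ := exists_det_submatrix_ne_zero_s1 hli
  have hB : IsUnit (W.submatrix (fun i : {i // i ∈ I} => (i : Fin k)) g).det := by
    have hWTU : W.IsTotallyUnimodular := hTU.submatrix Sum.inr id
    refine hWTU.isUnit_det_submatrix fun h => hg ?_
    rw [← map_zero (Int.castRingHom ℚ), ← h]
    exact (RingHom.map_det (Int.castRingHom ℚ) _).symm
  have hRW := eq_submatrix_mul_inv_mul_of_map_eq_mul (Int.castRingHom ℚ) Int.cast_injective hB
    (X := W.submatrix (fun i : {i // i ∉ I} => (i : Fin k)) id)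
    (Y := W.submatrix (fun i : {i // i ∈ I} => (i : Fin k)) id)
    (congrArg (submatrix · (fun i : {i // i ∉ I} => (i : Fin k)) id) hQ)
  refine ⟨I, _, hcard.trans hrank, ?_, hRW, ?_, hTU.fromRows_submatrix_right _⟩
  · rw [← hrank, ← hcard, ← Fintype.card_coe]
    exact hli.rank_matrix
  · rw [Matrix.add_mul, Matrix.mul_assoc, ← hRW, ← mul_eq_add_mul_submatrix_compl, sub_add_cancel]

/-- **W can be assumed to have full row rank in an affine TU decomposition.**
If `A = Ã + U W` is an affine TU decomposition where `W ∈ {0,±1}^{k×n}` has rank `k' < k`,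
then there is a subset `I` of the rows of `W` of size `k'` whose rows have rank `k'` and an
integral matrix `R` with `W_{Iᶜ} = R W_I`, such that
`A = Ã + (U_I + U_{Iᶜ} R) W_I` is a `k'`-row affine TU decomposition of `A`. -/
theorem affine_TU_decomposition_reduce_to_full_rank
    {m n k : ℕ} (A : Matrix (Fin m) (Fin n) ℤ) (U : Matrix (Fin m) (Fin k) ℤ)
    (W : Matrix (Fin k) (Fin n) ℤ) (k' : ℕ)
    (hW : ∀ i j, W i j ∈ ({-1, 0, 1} : Set ℤ))
    (hTU : (Matrix.fromRows (A - U * W) W).IsTotallyUnimodular)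
    (hrank : (W.map (Int.cast : ℤ → ℚ)).rank = k') (hk' : k' < k) :
    ∃ (I : Finset (Fin k)) (R : Matrix {i // i ∉ I} {i // i ∈ I} ℤ),
      I.card = k' ∧
      ((W.submatrix (fun i : {i // i ∈ I} => (i : Fin k)) id).map
        (Int.cast : ℤ → ℚ)).rank = k' ∧
      W.submatrix (fun i : {i // i ∉ I} => (i : Fin k)) id
        = R * W.submatrix (fun i : {i // i ∈ I} => (i : Fin k)) id ∧
      A = (A - U * W)
          + (U.submatrix id (fun i : {i // i ∈ I} => (i : Fin k))
              + U.submatrix id (fun i : {i // i ∉ I} => (i : Fin k)) * R)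
            * W.submatrix (fun i : {i // i ∈ I} => (i : Fin k)) id ∧
      (Matrix.fromRows (A - U * W)
        (W.submatrix (fun i : {i // i ∈ I} => (i : Fin k)) id)).IsTotallyUnimodular :=
  affine_TU_decomposition_reduce_to_full_rank_general A U W k' hTU hrank
end

section
/- Let A ∈ ℤ^{m×n} and let W ∈ ℤ^{k×n} have rank k, and suppose that the polyhedron {x ∈ ℝ^n : Ax ≤ b, Wx = d, x ≥ 0} is integral for every b ∈ ℤ^m and every d ∈ ℤ^k. Then there exist U ∈ ℤ^{m×k} and W' ∈ {0,±1}^{k×n} such that A = (A − UW') + UW' is an affine TU decomposition (i.e., stacking A − UW' on top of W' gives a totally unimodular matrix), and moreover, for every b ∈ ℤ^m, conv({x ∈ ℝ^n : Ax ≤ b, Wx ∈ ℤ^k, x ≥ 0}) = conv({x ∈ ℝ^n : Ax ≤ b, W'x ∈ ℤ^k, x ≥ 0}). -/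
/-!
Pick `k` columns `g` of `W` with `B := W_g` nonsingular, and put `W' := B⁻¹ W`, `U := A_g`; the
columns `g` of `[A - U W'; W']` are then the unit columns `[0; I]`.

Integrality of the fibers forces every nonsingular square submatrix `C` of `[A; W]` that contains
all rows of `W` to have an integral inverse, hence `det C = ±1`: for an integral `r`, the solution
of `C v = r`, shifted by an integral vector into the nonnegative orthant and padded by zeros, lies
in a fiber, on the face where the rows of `C` are tight and the other coordinates vanish. An
integral point of that face exists and solves the same nonsingular system, so it is the shifted
`v`.

In particular `det B = ±1`, so `W'` is integral and the fibers of `(A - U W', W')` are fibers of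
`(A, W)`. A square submatrix of `[A - U W'; W']` either has a zero column or, after adjoining the
missing rows of `W'` together with their unit columns, becomes one that contains all rows of `W'`
and has the same determinant. Finally `W x` is integral iff `W' x = B⁻¹ W x` is.
-/

open Matrix Set

open Function

theorem exists_mem_forall_eq_of_mem_convexHull {𝕜 E ι : Type*} [Field 𝕜] [LinearOrder 𝕜]
    [IsStrictOrderedRing 𝕜] [AddCommGroup E] [Module 𝕜 E] [Fintype ι]
    {s : Set E} {x : E} (hx : x ∈ convexHull 𝕜 s) (ℓ : ι → E →ₗ[𝕜] 𝕜)
    (hle : ∀ y ∈ s, ∀ i, ℓ i y ≤ ℓ i x) : ∃ y ∈ s, ∀ i, ℓ i y = ℓ i x := by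
  obtain ⟨y, hys, hxy⟩ :=
    ((∑ i, ℓ i).convexOn convex_univ).exists_ge_of_mem_convexHull (subset_univ s) hx
  simp only [LinearMap.sum_apply] at hxy
  have hsum := (Finset.sum_eq_sum_iff_of_le fun i _ => hle y hys i).1
    (le_antisymm (Finset.sum_le_sum fun i _ => hle y hys i) hxy)
  exact ⟨y, hys, fun i => hsum i (Finset.mem_univ i)⟩

namespace Matrix

theorem submatrix_mulVec_comp_of_supported {m n ι ι' R : Type*} [Fintype n] [Fintype ι]
    [NonUnitalNonAssocSemiring R] (M : Matrix m n R) (ρ : ι' → m) {h : ι → n}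
    (hh : Injective h) {y : n → R} (hy : ∀ c ∉ range h, y c = 0) :
    M.submatrix ρ h *ᵥ (y ∘ h) = (M *ᵥ y) ∘ ρ := by
  ext p
  simp only [mulVec, dotProduct, submatrix_apply]
  exact Fintype.sum_of_injective h hh _ _ (fun c hc => by simp [hy c hc]) fun _ => rfl

theorem exists_injective_isUnit_submatrix_of_rank_eq {m n K : Type*} [Fintype m]
    [DecidableEq m] [Fintype n] [Field K] (W : Matrix m n K) (hrank : W.rank = Fintype.card m) :
    ∃ g : m → n, Injective g ∧ IsUnit (W.submatrix id g) := by
  have hspan : Submodule.span K (range W.col) = ⊤ := by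
    apply Submodule.eq_top_of_finrank_eq
    rw [← rank_eq_finrank_span_cols, hrank, Module.finrank_fintype_fun_eq_card]
  obtain ⟨κ, a, ha, hspan', hli⟩ := exists_linearIndependent' K W.col
  let basis := Module.Basis.mk hli (by rw [hspan', hspan])
  have : Fintype κ := FiniteDimensional.fintypeBasisIndex basis
  have hcard : Fintype.card κ = Fintype.card m := by
    rw [← Module.finrank_eq_card_basis basis, Module.finrank_fintype_fun_eq_card]
  let e := Fintype.equivOfCardEq hcard.symm
  exact ⟨a ∘ e, ha.comp e.injective, linearIndependent_cols_iff_isUnit.1 (hli.comp e e.injective)⟩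

section IntCast

variable {l m n R : Type*} [Ring R]

theorem map_intCast_mulVec_s4 [Fintype n] (M : Matrix m n ℤ) (v : n → ℤ) :
    M.map (Int.cast : ℤ → R) *ᵥ (Int.cast ∘ v) = Int.cast ∘ (M *ᵥ v) :=
  funext fun i => ((Int.castRingHom R).map_mulVec M v i).symm

theorem map_intCast_mul_mulVec [Fintype m] [Fintype n] (P : Matrix l m ℤ) (Q : Matrix m n ℤ)
    (x : n → R) :
    (P * Q).map (Int.cast : ℤ → R) *ᵥ x = P.map Int.cast *ᵥ (Q.map Int.cast *ᵥ x) := by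
  rw [mulVec_mulVec]
  exact congrArg (· *ᵥ x) (Matrix.map_mul (f := Int.castRingHom R))

theorem map_intCast_sub (P Q : Matrix m n ℤ) :
    (P - Q).map (Int.cast : ℤ → R) = P.map (Int.cast : ℤ → R) - Q.map (Int.cast : ℤ → R) :=
  Matrix.map_sub _ Int.cast_sub P Q

end IntCast

theorem det_map_intCast {n R : Type*} [CommRing R] [Fintype n] [DecidableEq n] (C : Matrix n n ℤ) :
    (C.map (Int.cast : ℤ → R)).det = C.det :=
  ((Int.castRingHom R).map_det C).symm

def IsTotallyUnimodularRel {m k n R : Type*} [CommRing R] (A : Matrix m n R)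
    (W : Matrix k n R) : Prop :=
  ∀ (r : ℕ) (ρ : Fin r → m ⊕ k) (h : Fin r → n), Injective ρ → Injective h →
    (∀ j, Sum.inr j ∈ range ρ) → ((fromRows A W).submatrix ρ h).det ∈ range SignType.cast

theorem IsTotallyUnimodularRel.isTotallyUnimodular {m k n R : Type*} [CommRing R] [Fintype k]
    [DecidableEq k] {A : Matrix m n R} {W : Matrix k n R} (hAW : A.IsTotallyUnimodularRel W)
    {g : k → n} (hg : Injective g) (hA : A.submatrix id g = 0) (hW : W.submatrix id g = 1) :
    (fromRows A W).IsTotallyUnimodular := by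
  classical
  intro r ρ h hρ hh
  let S := {j : k // Sum.inr j ∉ range ρ}
  have hcol : ∀ p (j : S), fromRows A W (ρ p) (g j) = 0 := by
    intro p j
    rcases hp : ρ p with i | j'
    · simpa using congrFun₂ hA i j
    · have hne : j' ≠ j := fun he => j.2 ⟨p, hp.trans (congrArg _ he)⟩
      simpa [hne] using congrFun₂ hW j' j
  by_cases hzero : ∃ q, ∃ j : S, h q = g j
  · obtain ⟨q, j, hq⟩ := hzero
    exact ⟨0, (det_eq_zero_of_column_eq_zero q fun p => by simp [hq, hcol]).symm⟩
  push Not at hzero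
  let ρ' : Fin r ⊕ S → m ⊕ k := Sum.elim ρ fun j => Sum.inr j
  let h' : Fin r ⊕ S → n := Sum.elim h fun j => g j
  have hρ' : Injective ρ' := hρ.sumElim (Sum.inr_injective.comp Subtype.val_injective)
    fun p j he => j.2 ⟨p, he⟩
  have hh' : Injective h' := hh.sumElim (hg.comp Subtype.val_injective) hzero
  have hcover : ∀ j, Sum.inr j ∈ range ρ' := fun j =>
    (em (Sum.inr j ∈ range ρ)).elim (fun ⟨p, hp⟩ => ⟨Sum.inl p, hp⟩) fun hj => ⟨Sum.inr ⟨j, hj⟩, rfl⟩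
  have hblock : (fromRows A W).submatrix ρ' h' = fromBlocks ((fromRows A W).submatrix ρ h) 0
      ((fromRows A W).submatrix (fun j : S => Sum.inr j.1) h) 1 := by
    ext (p | j) (q | j')
    · rfl
    · exact hcol p j'
    · rfl
    · simpa [ρ', h', one_apply, ← Subtype.ext_iff] using congrFun₂ hW j j'
  let e := (Fintype.equivFin (Fin r ⊕ S)).symm
  have := hAW _ (ρ' ∘ e) (h' ∘ e) (hρ'.comp e.injective) (hh'.comp e.injective) fun j => by
    obtain ⟨p, hp⟩ := hcover j
    exact ⟨e.symm p, by simpa using hp⟩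
  rwa [← submatrix_submatrix, det_submatrix_equiv_self, hblock, det_fromBlocks_zero₁₂, det_one,
    mul_one] at this

end Matrix

theorem IsIntegerPoint.intCast_mulVec {k l : ℕ} (V : Matrix (Fin l) (Fin k) ℤ) {y : Fin k → ℝ}
    (hy : IsIntegerPoint y) : IsIntegerPoint (V.map Int.cast *ᵥ y) := by
  choose z hz using hy
  rw [show y = Int.cast ∘ z from funext hz, map_intCast_mulVec_s4]
  exact fun i => ⟨_, rfl⟩

theorem isIntegerPoint_inv_mul_mulVec_iff {k n : ℕ} {B : Matrix (Fin k) (Fin k) ℤ}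
    (hB : IsUnit B.det) (W : Matrix (Fin k) (Fin n) ℤ) (x : Fin n → ℝ) :
    IsIntegerPoint ((B⁻¹ * W).map Int.cast *ᵥ x) ↔ IsIntegerPoint (W.map Int.cast *ᵥ x) := by
  constructor <;> intro hx
  · rw [← mul_nonsing_inv_cancel_left B W hB, map_intCast_mul_mulVec]
    exact hx.intCast_mulVec B
  · rw [map_intCast_mul_mulVec]
    exact hx.intCast_mulVec B⁻¹

def fiberPolyhedron {m n k : ℕ} (A : Matrix (Fin m) (Fin n) ℤ) (W : Matrix (Fin k) (Fin n) ℤ)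
    (b : Fin m → ℤ) (d : Fin k → ℤ) : Set (Fin n → ℝ) :=
  {x | (∀ i, (A.map (Int.cast : ℤ → ℝ)).mulVec x i ≤ (b i : ℝ)) ∧
    (∀ j, (W.map (Int.cast : ℤ → ℝ)).mulVec x j = (d j : ℝ)) ∧ (∀ i, 0 ≤ x i)}

def HasIntegralFibers {m n k : ℕ} (A : Matrix (Fin m) (Fin n) ℤ) (W : Matrix (Fin k) (Fin n) ℤ) :
    Prop :=
  ∀ b d, fiberPolyhedron A W b d =
    convexHull ℝ {x | x ∈ fiberPolyhedron A W b d ∧ IsIntegerPoint x}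

namespace HasIntegralFibers

variable {m n k : ℕ} {A : Matrix (Fin m) (Fin n) ℤ} {W : Matrix (Fin k) (Fin n) ℤ}
  {ι : Type*} [Fintype ι] {ρ : ι → Fin m ⊕ Fin k}

theorem exists_isIntegerPoint_on_face (hAW : HasIntegralFibers A W)
    (hcover : ∀ j, Sum.inr j ∈ range ρ) {x : Fin n → ℝ} (hx0 : ∀ c, 0 ≤ x c)
    (hrows : ∀ p, ∃ z : ℤ, ((fromRows A W).map (Int.cast : ℤ → ℝ) *ᵥ x) (ρ p) = z) :
    ∃ u, IsIntegerPoint u ∧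
      (∀ p, ((fromRows A W).map Int.cast *ᵥ u) (ρ p) = ((fromRows A W).map Int.cast *ᵥ x) (ρ p)) ∧
      ∀ c, x c = 0 → u c = 0 := by
  set M := (fromRows A W).map (Int.cast : ℤ → ℝ) with hM
  have hMrow : ∀ y, M *ᵥ y = Sum.elim (A.map Int.cast *ᵥ y) (W.map Int.cast *ᵥ y) := fun y => by
    rw [hM, fromRows_map, fromRows_mulVec]
  let β : Fin m ⊕ Fin k → ℤ := fun r => ⌈(M *ᵥ x) r⌉
  have hβ : ∀ p, (M *ᵥ x) (ρ p) = β (ρ p) := fun p => by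
    obtain ⟨z, hz⟩ := hrows p
    simp only [β, hz, Int.ceil_intCast]
  have hxF : x ∈ fiberPolyhedron A W (β ∘ Sum.inl) (β ∘ Sum.inr) := by
    refine ⟨fun i => ?_, fun j => ?_, hx0⟩
    · calc (A.map Int.cast *ᵥ x) i = (M *ᵥ x) (Sum.inl i) := by rw [hMrow]; rfl
        _ ≤ β (Sum.inl i) := Int.le_ceil _
    · obtain ⟨p, hp⟩ := hcover j
      simpa [hMrow, hp] using hβ p
  rw [hAW] at hxF
  let ℓ : ι ⊕ {c // x c = 0} → (Fin n → ℝ) →ₗ[ℝ] ℝ :=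
    Sum.elim (fun p => LinearMap.proj (ρ p) ∘ₗ M.mulVecLin) fun c => -LinearMap.proj c.1
  obtain ⟨u, ⟨-, hu⟩, htight⟩ := exists_mem_forall_eq_of_mem_convexHull hxF ℓ <| by
    rintro y ⟨⟨hyA, hyW, hy0⟩, -⟩ (p | c)
    · change (M *ᵥ y) (ρ p) ≤ (M *ᵥ x) (ρ p)
      rw [hβ p]
      rcases ρ p with i | j
      · simpa [hMrow] using hyA i
      · simpa [hMrow] using (hyW j).le
    · simp [ℓ, c.2, hy0 c]
  refine ⟨u, hu, fun p => htight (Sum.inl p), fun c hc => ?_⟩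
  simpa [ℓ, hc] using htight (Sum.inr ⟨c, hc⟩)

variable [DecidableEq ι] {h : ι → Fin n}

theorem isIntegerPoint_of_rows (hAW : HasIntegralFibers A W) (hh : Injective h)
    (hcover : ∀ j, Sum.inr j ∈ range ρ) (hdet : ((fromRows A W).submatrix ρ h).det ≠ 0)
    {x : Fin n → ℝ} (hx0 : ∀ c, 0 ≤ x c) (hsupp : ∀ c ∉ range h, x c = 0)
    (hrows : ∀ p, ∃ z : ℤ, ((fromRows A W).map (Int.cast : ℤ → ℝ) *ᵥ x) (ρ p) = z) :
    IsIntegerPoint x := by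
  obtain ⟨u, hu, hrows_eq, hzero⟩ := hAW.exists_isIntegerPoint_on_face hcover hx0 hrows
  have hsuppu : ∀ c ∉ range h, u c = 0 := fun c hc => hzero c (hsupp c hc)
  set M := (fromRows A W).map (Int.cast : ℤ → ℝ) with hM
  have hMρh : IsUnit (M.submatrix ρ h) := by
    rw [isUnit_iff_isUnit_det, hM, submatrix_map, det_map_intCast, isUnit_iff_ne_zero]
    exact_mod_cast hdet
  have hcomp : u ∘ h = x ∘ h := by
    refine mulVec_injective_of_isUnit hMρh ?_
    rw [submatrix_mulVec_comp_of_supported _ _ hh hsuppu,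
      submatrix_mulVec_comp_of_supported _ _ hh hsupp]
    exact funext hrows_eq
  intro c
  by_cases hc : c ∈ range h
  · obtain ⟨q, rfl⟩ := hc
    rw [← show u (h q) = x (h q) from congrFun hcomp q]
    exact hu (h q)
  · exact ⟨0, by simp [hsupp c hc]⟩

theorem exists_mulVec_eq (hAW : HasIntegralFibers A W) (hh : Injective h)
    (hcover : ∀ j, Sum.inr j ∈ range ρ) (hdet : ((fromRows A W).submatrix ρ h).det ≠ 0)
    (r : ι → ℤ) : ∃ v, (fromRows A W).submatrix ρ h *ᵥ v = r := by
  set C := (fromRows A W).submatrix ρ h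
  set Cr := C.map (Int.cast : ℤ → ℝ)
  have hCr_det : IsUnit Cr.det := by
    rw [det_map_intCast, isUnit_iff_ne_zero]
    exact_mod_cast hdet
  set v := Cr⁻¹ *ᵥ (Int.cast ∘ r) with hv
  have hCv : Cr *ᵥ v = Int.cast ∘ r := by
    rw [hv, mulVec_mulVec, mul_nonsing_inv _ hCr_det, one_mulVec]
  let z : ι → ℤ := fun q => ⌈|v q|⌉
  let x : Fin n → ℝ := extend h (v + Int.cast ∘ z) 0
  have hxh : x ∘ h = v + Int.cast ∘ z := extend_comp hh _ 0
  have hsupp : ∀ c ∉ range h, x c = 0 := fun c hc => by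
    simp only [x, extend_apply' _ _ _ (fun ⟨q, hq⟩ => hc ⟨q, hq⟩), Pi.zero_apply]
  have hx0 : ∀ c, 0 ≤ x c := by
    intro c
    by_cases hc : c ∈ range h
    · obtain ⟨q, rfl⟩ := hc
      rw [show x (h q) = v q + z q from congrFun hxh q]
      linarith [Int.le_ceil |v q|, neg_abs_le (v q)]
    · exact (hsupp c hc).ge
  have hrows : ∀ p, ((fromRows A W).map Int.cast *ᵥ x) (ρ p) = ((r + C *ᵥ z) p : ℤ) := by
    intro p
    rw [← comp_apply (f := _ *ᵥ x), ← submatrix_mulVec_comp_of_supported _ _ hh hsupp,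
      submatrix_map, hxh, mulVec_add, hCv, map_intCast_mulVec_s4]
    simp [C]
  obtain ⟨y, hy⟩ : ∃ y : ι → ℤ, x ∘ h = Int.cast ∘ y := by
    choose y hy using fun q => hAW.isIntegerPoint_of_rows hh hcover hdet hx0 hsupp
      (fun p => ⟨_, hrows p⟩) (h q)
    exact ⟨y, funext hy⟩
  refine ⟨y - z, (Int.cast_injective (α := ℝ)).comp_left ?_⟩
  have hyz : Int.cast ∘ (y - z) = v := by
    funext q
    have := congrFun (hy.symm.trans hxh) q
    simp only [Function.comp_apply, Pi.sub_apply, Pi.add_apply, Int.cast_sub] at this ⊢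
    linarith
  change Int.cast ∘ (C *ᵥ (y - z)) = Int.cast ∘ r
  rw [← map_intCast_mulVec_s4, hyz, hCv]

theorem isUnit_det_submatrix (hAW : HasIntegralFibers A W) (hh : Injective h)
    (hcover : ∀ j, Sum.inr j ∈ range ρ) (hdet : ((fromRows A W).submatrix ρ h).det ≠ 0) :
    IsUnit ((fromRows A W).submatrix ρ h).det :=
  (isUnit_iff_isUnit_det _).1 (mulVec_surjective_iff_isUnit.1 (hAW.exists_mulVec_eq hh hcover hdet))

theorem isTotallyUnimodularRel (hAW : HasIntegralFibers A W) : A.IsTotallyUnimodularRel W := by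
  intro r ρ h _ hh hcover
  rw [SignType.range_eq]
  by_cases hdet : ((fromRows A W).submatrix ρ h).det = 0
  · simp [hdet]
  rcases Int.isUnit_iff.1 (hAW.isUnit_det_submatrix hh hcover hdet) with h1 | h1 <;> simp [h1]

theorem sub_mul_inv_mul (hAW : HasIntegralFibers A W) (U : Matrix (Fin m) (Fin k) ℤ)
    {B : Matrix (Fin k) (Fin k) ℤ} (hB : IsUnit B.det) :
    HasIntegralFibers (A - U * (B⁻¹ * W)) (B⁻¹ * W) := by
  suffices hfiber : ∀ b d, fiberPolyhedron (A - U * (B⁻¹ * W)) (B⁻¹ * W) b d =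
      fiberPolyhedron A W (b + U *ᵥ d) (B *ᵥ d) by
    intro b d
    rw [hfiber]
    exact hAW _ _
  intro b d
  ext x
  have hW : (B⁻¹ * W).map Int.cast *ᵥ x = Int.cast ∘ d ↔
      W.map Int.cast *ᵥ x = Int.cast ∘ (B *ᵥ d) := by
    constructor <;> intro hx
    · rw [← mul_nonsing_inv_cancel_left B W hB, map_intCast_mul_mulVec, hx, map_intCast_mulVec_s4]
    · rw [map_intCast_mul_mulVec, hx, map_intCast_mulVec_s4, mulVec_mulVec, nonsing_inv_mul _ hB,
        one_mulVec]
  have hA : (B⁻¹ * W).map Int.cast *ᵥ x = Int.cast ∘ d → ∀ i,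
      (((A - U * (B⁻¹ * W)).map Int.cast *ᵥ x) i ≤ b i ↔
        (A.map Int.cast *ᵥ x) i ≤ ((b + U *ᵥ d) i : ℤ)) := by
    intro hd i
    rw [map_intCast_sub, sub_mulVec, map_intCast_mul_mulVec, hd, map_intCast_mulVec_s4]
    simp only [Pi.sub_apply, Function.comp_apply, Pi.add_apply, Int.cast_add]
    constructor <;> intro <;> linarith
  simp only [fiberPolyhedron, mem_ofPred_eq]
  constructor
  · rintro ⟨hAx, hWx, hx0⟩
    exact ⟨fun i => (hA (funext hWx) i).1 (hAx i), congrFun (hW.1 (funext hWx)), hx0⟩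
  · rintro ⟨hAx, hWx, hx0⟩
    exact ⟨fun i => (hA (hW.2 (funext hWx)) i).2 (hAx i), congrFun (hW.2 (funext hWx)), hx0⟩

end HasIntegralFibers

/-- **Converse direction: integrality of all fibers yields an affine TU decomposition.**
If `W` has rank `k` and `{x ≥ 0 : A x ≤ b, W x = d}` is integral for all integral `b, d`,
then there are `U ∈ ℤ^{m×k}` and `W' ∈ {0,±1}^{k×n}` such that `A = (A - U W') + U W'`
is an affine TU decomposition, and moreover for every integral `b`,
`conv {x ≥ 0 : A x ≤ b, W x ∈ ℤᵏ} = conv {x ≥ 0 : A x ≤ b, W' x ∈ ℤᵏ}`. -/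
theorem integral_fibers_implies_affine_TU_decomposition
    {m n k : ℕ} (A : Matrix (Fin m) (Fin n) ℤ) (W : Matrix (Fin k) (Fin n) ℤ)
    (hrank : (W.map (Int.cast : ℤ → ℚ)).rank = k)
    (hint : ∀ (b : Fin m → ℤ) (d : Fin k → ℤ),
      {x : Fin n → ℝ |
          (∀ i, (A.map (Int.cast : ℤ → ℝ)).mulVec x i ≤ (b i : ℝ)) ∧
          (∀ j, (W.map (Int.cast : ℤ → ℝ)).mulVec x j = (d j : ℝ)) ∧
          (∀ i, 0 ≤ x i)}
        = convexHull ℝ {x : Fin n → ℝ |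
          ((∀ i, (A.map (Int.cast : ℤ → ℝ)).mulVec x i ≤ (b i : ℝ)) ∧
          (∀ j, (W.map (Int.cast : ℤ → ℝ)).mulVec x j = (d j : ℝ)) ∧
          (∀ i, 0 ≤ x i)) ∧ IsIntegerPoint x}) :
    ∃ (U : Matrix (Fin m) (Fin k) ℤ) (W' : Matrix (Fin k) (Fin n) ℤ),
      (∀ i j, W' i j ∈ ({-1, 0, 1} : Set ℤ)) ∧
      (Matrix.fromRows (A - U * W') W').IsTotallyUnimodular ∧
      ∀ b : Fin m → ℤ,
        convexHull ℝ {x : Fin n → ℝ |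
            (∀ i, (A.map (Int.cast : ℤ → ℝ)).mulVec x i ≤ (b i : ℝ)) ∧
            (∀ j, ∃ z : ℤ, (W.map (Int.cast : ℤ → ℝ)).mulVec x j = (z : ℝ)) ∧
            (∀ i, 0 ≤ x i)}
          = convexHull ℝ {x : Fin n → ℝ |
            (∀ i, (A.map (Int.cast : ℤ → ℝ)).mulVec x i ≤ (b i : ℝ)) ∧
            (∀ j, ∃ z : ℤ, (W'.map (Int.cast : ℤ → ℝ)).mulVec x j = (z : ℝ)) ∧
            (∀ i, 0 ≤ x i)} := by
  have hAW : HasIntegralFibers A W := hint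
  obtain ⟨g, hg, hgW⟩ := (W.map (Int.cast : ℤ → ℚ)).exists_injective_isUnit_submatrix_of_rank_eq
    (by rwa [Fintype.card_fin])
  set B := W.submatrix id g
  have hB : IsUnit B.det := by
    refine hAW.isUnit_det_submatrix (ρ := Sum.inr) hg (fun j => ⟨j, rfl⟩) ?_
    rw [isUnit_iff_isUnit_det, submatrix_map, det_map_intCast, isUnit_iff_ne_zero] at hgW
    exact_mod_cast hgW
  set W' := B⁻¹ * W
  set U := A.submatrix id g
  have hW'g : W'.submatrix id g = 1 := by
    rw [submatrix_mul _ _ _ id _ bijective_id, submatrix_id_id, nonsing_inv_mul _ hB]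
  have hA'g : (A - U * W').submatrix id g = 0 := by
    change U - (U * W').submatrix id g = 0
    rw [submatrix_mul _ _ _ id _ bijective_id, submatrix_id_id, hW'g, Matrix.mul_one, sub_self]
  have hTU : (fromRows (A - U * W') W').IsTotallyUnimodular :=
    (hAW.sub_mul_inv_mul U hB).isTotallyUnimodularRel.isTotallyUnimodular hg hA'g hW'g
  refine ⟨U, W', fun i j => ?_, hTU, fun b => ?_⟩
  · obtain ⟨s, hs⟩ := hTU.apply (Sum.inr i) j
    rw [fromRows_apply_inr] at hs
    cases s <;> simp [← hs]
  · congr 1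
    ext x
    exact and_congr_right' (and_congr_left' (isIntegerPoint_inv_mul_mulVec_iff hB W x).symm)
end

section
/- Let ℓ ≥ 1 be an integer and n = ℓ². Then the 1×n row vector a^T = [1, 2, …, n] admits an affine TU decomposition with at most 2ℓ − 2 rows; that is, there exist ã ∈ {0,±1}^n, u ∈ ℤ^{2ℓ−2}, and a matrix W ∈ {0,1}^{(2ℓ−2)×n} such that a^T = ã^T + u^T W and the matrix obtained by stacking ã^T on top of W is totally unimodular. In particular the affine TU-dimension of a^T is at most 2ℓ − 2. -/
open Matrix Set

/-!
Index columns from `0`, so that `a_j = j + 1`, write `j = ℓ q + r` with `0 ≤ q, r < ℓ` and take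
`ã = 1`. Label the row of `ã` by `0`, the `ℓ - 1` rows of weight `ℓ` by `-1, …, -(ℓ - 1)` and the
`ℓ - 1` rows of weight `1` by `1, …, ℓ - 1`; column `j` of `W` is the indicator of the labels in
`[-q, r]`, so that `uᵀ W_j = ℓ q + r = j`.
Every column of `[ãᵀ; W]` is then an interval for the label order, and such consecutive-ones
matrices are totally unimodular: once the rows of a square submatrix are sorted, subtracting from
each row the next one leaves at most one `+1` and one `-1` in every column, and a matrix of that
kind has determinant `0` or `±1`, by Laplace expansion along a column with at most one nonzero
entry, or because its rows sum to zero.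
-/

section OrdConnected

variable {α : Type*} [LinearOrder α] {s : Set α} {a c : α}

theorem Set.OrdConnected.isGreatest_of_forall_covBy_notMem [IsStronglyAtomic α]
    (hs : s.OrdConnected) (ha : a ∈ s) (h : ∀ c, a ⋖ c → c ∉ s) : IsGreatest s a :=
  ⟨ha, fun _ hx => le_of_not_gt fun hax =>
    let ⟨c, hac, hcx⟩ := exists_covBy_le_of_lt hax
    h c hac (hs.out ha hx ⟨hac.le, hcx⟩)⟩

theorem Set.OrdConnected.isLeast_of_covBy (hs : s.OrdConnected) (ha : a ∉ s) (hac : a ⋖ c)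
    (hc : c ∈ s) : IsLeast s c :=
  ⟨hc, fun _ hx => le_of_not_gt fun hxc => ha (hs.out hx hc ⟨hac.le_of_lt hxc, hac.le⟩)⟩

theorem Set.OrdConnected.subsingleton_diff_covBy [IsStronglyAtomic α] (hs : s.OrdConnected) :
    (s \ {a | ∃ c, a ⋖ c ∧ c ∈ s}).Subsingleton := by
  have hgreatest : ∀ a ∈ s \ {a | ∃ c, a ⋖ c ∧ c ∈ s}, IsGreatest s a := fun a ⟨ha, hna⟩ =>
    hs.isGreatest_of_forall_covBy_notMem ha fun c hac hc => hna ⟨c, hac, hc⟩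
  exact fun a ha b hb => (hgreatest a ha).unique (hgreatest b hb)

theorem Set.OrdConnected.subsingleton_covBy_diff (hs : s.OrdConnected) :
    ({a | ∃ c, a ⋖ c ∧ c ∈ s} \ s).Subsingleton := by
  rintro a ⟨⟨c, hac, hc⟩, ha⟩ b ⟨⟨d, hbd, hd⟩, hb⟩
  have hcd : c = d := (hs.isLeast_of_covBy ha hac hc).unique (hs.isLeast_of_covBy hb hbd hd)
  exact hac.unique_left (hcd ▸ hbd)

end OrdConnected

section SignType

variable {ι R : Type*} [CommRing R]

lemma mul_mem_range_signType_cast {a b : R} (ha : a ∈ range SignType.cast)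
    (hb : b ∈ range SignType.cast) : a * b ∈ range SignType.cast := by
  obtain ⟨s, rfl⟩ := ha
  obtain ⟨t, rfl⟩ := hb
  exact ⟨s * t, SignType.coe_mul s t⟩

lemma Set.indicator_sub_indicator_mem_range_signType_cast (s t : Set ι) (i : ι) :
    s.indicator (1 : ι → R) i - t.indicator 1 i ∈ range SignType.cast := by
  classical
  simp only [indicator_apply, Pi.one_apply]
  split_ifs
  exacts [⟨0, by simp⟩, ⟨1, by simp⟩, ⟨-1, by simp⟩, ⟨0, by simp⟩]

lemma Set.Subsingleton.sum_indicator_one [Fintype ι] {s : Set ι} (hs : s.Subsingleton)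
    (hne : s.Nonempty) : ∑ i, s.indicator (1 : ι → R) i = 1 := by
  classical
  obtain ⟨p, hp⟩ := hne
  simp [hs.eq_singleton_of_mem hp, indicator_apply]

end SignType

lemma Fin.sum_boole_val_lt {N q : ℕ} (h : q ≤ N) :
    ∑ t : Fin N, (if (t : ℕ) < q then (1 : ℤ) else 0) = q := by
  simp [Finset.sum_boole, Fin.card_filter_val_lt, h]

namespace Matrix

variable {m n α R : Type*} [CommRing R]

lemma det_eq_zero_of_sum_rows_eq_zero [Fintype m] [DecidableEq m] [Nonempty m]
    (A : Matrix m m R) (h : ∀ j, ∑ i, A i j = 0) : A.det = 0 := by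
  obtain ⟨i⟩ := ‹Nonempty m›
  simpa using (det_updateRow_sum A i 1).symm.trans (det_eq_zero_of_row_eq_zero i
    (by simpa using fun j => (Finset.sum_apply j _ _).trans (h j)))

lemma det_mem_range_signType_cast_of_col_eq_single {k : ℕ}
    (A : Matrix (Fin (k + 1)) (Fin (k + 1)) R) {i₀ j : Fin (k + 1)} (hcol : ∀ i ≠ i₀, A i j = 0)
    (hA : A i₀ j ∈ range SignType.cast)
    (hminor : (A.submatrix i₀.succAbove j.succAbove).det ∈ range SignType.cast) :
    A.det ∈ range SignType.cast := by
  rw [det_succ_column A j, Fintype.sum_eq_single i₀ fun i hi => by rw [hcol i hi]; ring]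
  exact mul_mem_range_signType_cast
    (mul_mem_range_signType_cast ⟨(-1) ^ ((i₀ : ℕ) + j), by simp⟩ hA) hminor

theorem det_indicator_sub_indicator_mem_range_signType_cast :
    ∀ {k : ℕ} (P N : Fin k → Set (Fin k)), (∀ j, (P j).Subsingleton) → (∀ j, (N j).Subsingleton) →
      (of fun i j => (P j).indicator (1 : Fin k → R) i - (N j).indicator 1 i).det ∈
        range SignType.cast
  | 0, _, _, _, _ => ⟨1, by simp⟩
  | k + 1, P, N, hP, hN => by
    classical
    set A : Matrix (Fin (k + 1)) (Fin (k + 1)) R :=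
      of fun i j => (P j).indicator 1 i - (N j).indicator 1 i
    by_cases hsparse : ∃ j, P j = ∅ ∨ N j = ∅
    · obtain ⟨j, hj⟩ := hsparse
      obtain ⟨i₀, hi₀⟩ : ∃ i₀, ∀ i ≠ i₀, A i j = 0 := by
        have hsub : (P j ∪ N j).Subsingleton := by
          rcases hj with h | h <;> simp [h, hP j, hN j]
        obtain ⟨i₀, hi₀⟩ : ∃ i₀, P j ∪ N j ⊆ {i₀} := by
          rcases hsub.eq_empty_or_singleton with h | ⟨i₀, h⟩
          exacts [⟨0, h.trans_subset (empty_subset _)⟩, ⟨i₀, h.subset⟩]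
        refine ⟨i₀, fun i hi => ?_⟩
        have hP' : i ∉ P j := fun h => hi (hi₀ (Or.inl h))
        have hN' : i ∉ N j := fun h => hi (hi₀ (Or.inr h))
        simp [A, hP', hN']
      have hminor : A.submatrix i₀.succAbove j.succAbove = of fun i j' =>
          (i₀.succAbove ⁻¹' P (j.succAbove j')).indicator 1 i -
            (i₀.succAbove ⁻¹' N (j.succAbove j')).indicator 1 i := by
        ext i j'
        simp [A, indicator_apply]
      refine det_mem_range_signType_cast_of_col_eq_single A hi₀
        (indicator_sub_indicator_mem_range_signType_cast _ _ _) ?_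
      rw [hminor]
      exact det_indicator_sub_indicator_mem_range_signType_cast _ _
        (fun _ => (hP _).preimage Fin.succAbove_right_injective)
        (fun _ => (hN _).preimage Fin.succAbove_right_injective)
    · push Not at hsparse
      refine ⟨0, (det_eq_zero_of_sum_rows_eq_zero A fun j => ?_).symm⟩
      simp only [A, of_apply, Finset.sum_sub_distrib, (hP j).sum_indicator_one (hsparse j).1,
        (hN j).sum_indicator_one (hsparse j).2, sub_self]

theorem det_indicator_ordConnected_mem_range_signType_cast {k : ℕ} (T : Fin k → Set (Fin k))
    (hT : ∀ j, (T j).OrdConnected) :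
    (of fun i j => (T j).indicator (1 : Fin k → R) i).det ∈ range SignType.cast := by
  classical
  set C : Matrix (Fin k) (Fin k) R := of fun i j => (T j).indicator 1 i
  set U : Fin k → Set (Fin k) := fun j => {i | ∃ c, i ⋖ c ∧ c ∈ T j}
  set Δ : Matrix (Fin k) (Fin k) R :=
    of fun i i' => (if i' = i then 1 else 0) - if i ⋖ i' then 1 else 0
  have hΔ : Δ.det = 1 := by
    rw [det_of_isUpperTriangular fun i i' (h : i' < i) => by
      simp only [Δ, of_apply, if_neg h.ne, if_neg fun hc : i ⋖ i' => h.not_gt hc.lt, sub_zero]]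
    simp [Δ]
  have hshift : ∀ i j, ∑ i', (if i ⋖ i' then (1 : R) else 0) * C i' j = (U j).indicator 1 i := by
    intro i j
    by_cases hi : ∃ c, i ⋖ c
    · obtain ⟨c, hc⟩ := hi
      have hU : i ∈ U j ↔ c ∈ T j :=
        ⟨fun ⟨d, hd, hdT⟩ => hd.unique_right hc ▸ hdT, fun h => ⟨c, hc, h⟩⟩
      rw [Fintype.sum_eq_single c fun i' hi' => by
        rw [if_neg fun h : i ⋖ i' => hi' (h.unique_right hc), zero_mul]]
      by_cases hcT : c ∈ T j <;> simp [C, hc, hcT, hU]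
    · push Not at hi
      have hU : i ∉ U j := fun ⟨c, hc, _⟩ => hi c hc
      simp [hi, hU]
  have hΔC : Δ * C = of fun i j => (T j \ U j).indicator 1 i - (U j \ T j).indicator 1 i := by
    ext i j
    rw [mul_apply]
    simp only [Δ, of_apply, sub_mul, Finset.sum_sub_distrib, hshift]
    by_cases hT' : i ∈ T j <;> by_cases hU' : i ∈ U j <;> simp [C, hT', hU']
  rw [← one_mul C.det, ← hΔ, ← det_mul, hΔC]
  exact det_indicator_sub_indicator_mem_range_signType_cast _ _
    (fun j => (hT j).subsingleton_diff_covBy) (fun j => (hT j).subsingleton_covBy_diff)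

theorem isTotallyUnimodular_indicator_ordConnected [LinearOrder α] (ρ : m → α)
    (S : n → Set α) (hS : ∀ j, (S j).OrdConnected) :
    (of fun i j => (S j).indicator (1 : α → R) (ρ i)).IsTotallyUnimodular := by
  rw [isTotallyUnimodular_iff]
  intro k f g
  set σ := Tuple.sort (ρ ∘ f)
  have hsorted := det_indicator_ordConnected_mem_range_signType_cast (R := R)
    (fun j => (ρ ∘ f ∘ σ) ⁻¹' S (g j))
    fun j => (hS (g j)).preimage_mono (Tuple.monotone_sort (ρ ∘ f))
  have hperm : (of fun i j => ((ρ ∘ f ∘ σ) ⁻¹' S (g j)).indicator (1 : Fin k → R) i) =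
      ((of fun i j => (S j).indicator (1 : α → R) (ρ i)).submatrix f g).submatrix σ id := by
    ext i j
    exact indicator_comp_right (g := 1) _
  rw [hperm, det_permute] at hsorted
  rcases Int.units_eq_one_or (Equiv.Perm.sign σ) with h | h <;> rw [h] at hsorted
  · simpa using hsorted
  · obtain ⟨s, hs⟩ := hsorted
    exact ⟨-s, by simp [hs]⟩

end Matrix

def IsBinaryAffineTUDecomposition {κ n : Type*} [Fintype κ] (a atilde : n → ℤ) (u : κ → ℤ)
    (W : Matrix κ n ℤ) : Prop :=
  (∀ j, atilde j ∈ ({-1, 0, 1} : Set ℤ)) ∧ (∀ i j, W i j ∈ ({0, 1} : Set ℤ)) ∧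
    (∀ j, a j = atilde j + (u ᵥ* W) j) ∧
    (fromRows (of fun (_ : Fin 1) j => atilde j) W).IsTotallyUnimodular

theorem IsBinaryAffineTUDecomposition.reindex {κ κ' n : Type*} [Fintype κ] [Fintype κ']
    {a atilde : n → ℤ} {u : κ → ℤ} {W : Matrix κ n ℤ}
    (h : IsBinaryAffineTUDecomposition a atilde u W) (e : κ ≃ κ') :
    IsBinaryAffineTUDecomposition a atilde (u ∘ e.symm) (W.submatrix e.symm id) := by
  obtain ⟨hatilde, hW, hsum, hTU⟩ := h
  refine ⟨hatilde, fun i j => hW _ _,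
    fun j => by simp [submatrix_vecMul_equiv, Function.comp_assoc, hsum j], ?_⟩
  have hrows : fromRows (of fun (_ : Fin 1) j => atilde j) (W.submatrix e.symm id) =
      (fromRows (of fun (_ : Fin 1) j => atilde j) W).submatrix (Sum.map id e.symm) id := by
    ext (_ | _) j <;> rfl
  rw [hrows]
  exact hTU.submatrix _ _

namespace MasterKnapsack

def rowLabel (p s : ℕ) : Fin (p - 1) ⊕ Fin (s - 1) → ℤ :=
  Sum.elim (fun t => -((t : ℤ) + 1)) (fun t => (t : ℤ) + 1)

def weight (p s : ℕ) : Fin (p - 1) ⊕ Fin (s - 1) → ℤ :=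
  Sum.elim (fun _ => s) (fun _ => 1)

def colInterval (s j : ℕ) : Set ℤ :=
  Icc (-Nat.cast (j / s)) (Nat.cast (j % s))

noncomputable def wMatrix (p s n : ℕ) : Matrix (Fin (p - 1) ⊕ Fin (s - 1)) (Fin n) ℤ :=
  of fun i j => (colInterval s j).indicator 1 (rowLabel p s i)

lemma wMatrix_inl (p s n : ℕ) (t : Fin (p - 1)) (j : Fin n) :
    wMatrix p s n (.inl t) j = if (t : ℕ) < j / s then 1 else 0 := by
  classical
  simp only [wMatrix, colInterval, rowLabel, of_apply, Sum.elim_inl, indicator_apply, mem_Icc,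
    Pi.one_apply]
  generalize (j : ℕ) / s = q, (j : ℕ) % s = r
  split_ifs <;> omega

lemma wMatrix_inr (p s n : ℕ) (t : Fin (s - 1)) (j : Fin n) :
    wMatrix p s n (.inr t) j = if (t : ℕ) < j % s then 1 else 0 := by
  classical
  simp only [wMatrix, colInterval, rowLabel, of_apply, Sum.elim_inr, indicator_apply, mem_Icc,
    Pi.one_apply]
  generalize (j : ℕ) / s = q, (j : ℕ) % s = r
  split_ifs <;> omega

lemma weight_vecMul_wMatrix {p s n : ℕ} (hn : n ≤ p * s) (j : Fin n) :
    (weight p s ᵥ* wMatrix p s n) j = j := by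
  have hj : (j : ℕ) < p * s := j.isLt.trans_le hn
  have hs : 0 < s := Nat.pos_of_mul_pos_left (Nat.zero_lt_of_lt hj)
  have hq : (j : ℕ) / s ≤ p - 1 := Nat.le_sub_one_of_lt ((Nat.div_lt_iff_lt_mul hs).2 hj)
  have hr : (j : ℕ) % s ≤ s - 1 := Nat.le_sub_one_of_lt (Nat.mod_lt _ hs)
  simp only [vecMul, dotProduct, Fintype.sum_sum_type, weight, Sum.elim_inl, Sum.elim_inr,
    wMatrix_inl, wMatrix_inr, one_mul, ← Finset.mul_sum, Fin.sum_boole_val_lt hq,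
    Fin.sum_boole_val_lt hr]
  exact_mod_cast Nat.div_add_mod j s

theorem isBinaryAffineTUDecomposition {p s n : ℕ} (hn : n ≤ p * s) :
    IsBinaryAffineTUDecomposition (fun j : Fin n => ((j : ℕ) : ℤ) + 1) 1 (weight p s)
      (wMatrix p s n) := by
  refine ⟨fun _ => by simp, fun i j => ?_, fun j => ?_, ?_⟩
  · rcases i with t | t
    · rw [wMatrix_inl]; split_ifs <;> simp
    · rw [wMatrix_inr]; split_ifs <;> simp
  · rw [weight_vecMul_wMatrix hn, Pi.one_apply, add_comm]
  · have hrows : fromRows (of fun (_ : Fin 1) j => (1 : Fin n → ℤ) j) (wMatrix p s n) =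
        of fun i (j : Fin n) =>
          (colInterval s j).indicator 1 (Sum.elim (fun _ : Fin 1 => 0) (rowLabel p s) i) := by
      ext (_ | _) j
      · have h0 : (0 : ℤ) ∈ colInterval s j :=
          ⟨neg_nonpos.2 (Nat.cast_nonneg _), Nat.cast_nonneg _⟩
        simp [h0]
      · rfl
    rw [hrows]
    exact isTotallyUnimodular_indicator_ordConnected _ _ fun _ => ordConnected_Icc

end MasterKnapsack

theorem master_knapsack_affine_TU_dimension_upper_bound_general
    (ℓ : ℕ) (n : ℕ) (hn : n = ℓ ^ 2)
    (a : Fin n → ℤ) (ha : ∀ j, a j = (j : ℕ) + 1) :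
    ∃ (atilde : Fin n → ℤ) (u : Fin (2 * ℓ - 2) → ℤ)
      (W : Matrix (Fin (2 * ℓ - 2)) (Fin n) ℤ),
      (∀ j, atilde j ∈ ({-1, 0, 1} : Set ℤ)) ∧
      (∀ i j, W i j ∈ ({0, 1} : Set ℤ)) ∧
      (∀ j, a j = atilde j + Matrix.vecMul u W j) ∧
      (Matrix.fromRows (Matrix.of fun (_ : Fin 1) j => atilde j) W).IsTotallyUnimodular := by
  obtain rfl : a = fun j : Fin n => ((j : ℕ) : ℤ) + 1 := funext ha
  have hdec := MasterKnapsack.isBinaryAffineTUDecomposition (p := ℓ) (s := ℓ) (hn.trans (sq ℓ)).le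
  exact ⟨_, _, _, hdec.reindex (finSumFinEquiv.trans (finCongr (by omega)))⟩

/-- **Upper bound on the affine TU-dimension of the master knapsack vector.**
For `n = ℓ²`, the row vector `aᵀ = [1, 2, …, n]` admits an affine TU decomposition
`aᵀ = ãᵀ + uᵀ W` with at most `2ℓ - 2` rows (where `W` is a `0/1` matrix and the
stacking of `ãᵀ` on top of `W` is totally unimodular). -/
theorem master_knapsack_affine_TU_dimension_upper_bound
    (ℓ : ℕ) (hℓ : 1 ≤ ℓ) (n : ℕ) (hn : n = ℓ ^ 2)
    (a : Fin n → ℤ) (ha : ∀ j, a j = (j : ℕ) + 1) :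
    ∃ (atilde : Fin n → ℤ) (u : Fin (2 * ℓ - 2) → ℤ)
      (W : Matrix (Fin (2 * ℓ - 2)) (Fin n) ℤ),
      (∀ j, atilde j ∈ ({-1, 0, 1} : Set ℤ)) ∧
      (∀ i j, W i j ∈ ({0, 1} : Set ℤ)) ∧
      (∀ j, a j = atilde j + Matrix.vecMul u W j) ∧
      (Matrix.fromRows (Matrix.of fun (_ : Fin 1) j => atilde j) W).IsTotallyUnimodular :=
  master_knapsack_affine_TU_dimension_upper_bound_general ℓ n hn a ha
end

section
/- Let n ≥ 1 and let a^T = [1, 2, …, n] be the 1×n row vector with entries 1 through n. If a^T = ã^T + u^T W is an affine TU decomposition with W ∈ {0,±1}^{k×n} (so that stacking ã^T on top of W yields a totally unimodular matrix), then k ≥ √n − 2. In particular the affine TU-dimension of a^T is at least √n − 2. -/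
/-!
Heller's bound, by induction on the number of rows: deleting the last row of a totally
unimodular matrix with distinct columns in `ℤ^(m+1)` leaves at most `m² + m + 1` distinct columns
`b`, and over each `b` sit the columns `(b, δ)` with `δ ∈ {-1, 0, 1}`. Over `b ≠ 0` the values
`1` and `-1` exclude each other (a `2 × 2` minor would be `±2`), so only the `b` carrying both
`(b, 0)` and `(b, ±1)` add an extra column, besides `b = 0`, which may carry all three. For a
fixed sign these `b` agree wherever their supports meet, and their supports traced on any one of
them form a chain (otherwise a `3 × 3` minor is `±2`). Hence each such `b` has a coordinate `s` in its support such that every other support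
through `s` contains that of `b`; `b ↦ s` is injective, so there are at most `m` of them for each
sign, and at most `2m + 2` extra columns in all.

For the knapsack row, `a_j = ã_j + uᵀ W_j` is a function of the `j`-th column of `[ãᵀ; W]`, and the
`a_j` are distinct, so that TU matrix with `k + 1` rows has `n` distinct columns:
`n ≤ (k + 1)² + (k + 1) + 1 ≤ (k + 2)²`.
-/

open Matrix

namespace Finset

variable {ι : Type*} [DecidableEq ι]

theorem exists_mem_forall_mem_imp_subset_of_traces_chain (F : Finset (Finset ι))
    {X : Finset ι} (hX : X.Nonempty) (hchain : ∀ Y ∈ F, ∀ Z ∈ F, Y ∩ X ⊆ Z ∨ Z ∩ X ⊆ Y) :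
    ∃ s ∈ X, ∀ Y ∈ F, s ∈ Y → X ⊆ Y := by
  set Q := F.filter (¬ X ⊆ ·)
  obtain hQ | hQ := Q.eq_empty_or_nonempty
  · obtain ⟨s, hs⟩ := hX
    refine ⟨s, hs, fun Y hY _ => ?_⟩
    by_contra hXY
    exact eq_empty_iff_forall_notMem.mp hQ Y (mem_filter.mpr ⟨hY, hXY⟩)
  -- a largest proper trace `Y₀ ∩ X` contains every other proper trace
  obtain ⟨Y₀, hY₀Q, hmax⟩ := Q.exists_max_image (fun Y => (Y ∩ X).card) hQ
  obtain ⟨hY₀F, hXY₀⟩ := mem_filter.mp hY₀Q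
  obtain ⟨s, hsX, hsY₀⟩ := not_subset.mp hXY₀
  refine ⟨s, hsX, fun Y hY hsY => ?_⟩
  by_contra hXY
  rcases hchain Y hY Y₀ hY₀F with h | h
  · exact hsY₀ (h (mem_inter.mpr ⟨hsY, hsX⟩))
  · have hsub : Y₀ ∩ X ⊆ Y ∩ X := subset_inter h inter_subset_right
    have heq := eq_of_subset_of_card_le hsub (hmax Y (mem_filter.mpr ⟨hY, hXY⟩))
    exact hsY₀ (mem_of_mem_inter_left (heq ▸ mem_inter.mpr ⟨hsY, hsX⟩))

theorem card_le_of_traces_chain [Fintype ι] (F : Finset (Finset ι))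
    (hne : ∀ X ∈ F, X.Nonempty)
    (hchain : ∀ X ∈ F, ∀ Y ∈ F, ∀ Z ∈ F, Y ∩ X ⊆ Z ∨ Z ∩ X ⊆ Y) :
    F.card ≤ Fintype.card ι := by
  choose s hsX hs using fun (X : F) =>
    exists_mem_forall_mem_imp_subset_of_traces_chain F (hne X X.2) (hchain X X.2)
  have hinj : Function.Injective s := fun X Y hXY =>
    Subtype.ext (subset_antisymm (hs X Y Y.2 (hXY ▸ hsX Y)) (hs Y X X.2 (hXY ▸ hsX X)))
  simpa using Fintype.card_le_of_injective s hinj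

end Finset

theorem card_le_of_agree_of_supports_chain {ι α : Type*} [Fintype ι] [Zero α]
    (P : Finset (ι → α)) (hne : ∀ x ∈ P, x ≠ 0)
    (hagree : ∀ x ∈ P, ∀ y ∈ P, ∀ s, x s ≠ 0 → y s ≠ 0 → x s = y s)
    (hchain : ∀ x ∈ P, ∀ y ∈ P, ∀ z ∈ P,
      (∀ s, y s ≠ 0 → x s ≠ 0 → z s ≠ 0) ∨ (∀ s, z s ≠ 0 → x s ≠ 0 → y s ≠ 0)) :
    P.card ≤ Fintype.card ι := by
  classical
  set supp : (ι → α) → Finset ι := fun x => Finset.univ.filter (x · ≠ 0)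
  have hsupp : ∀ x s, s ∈ supp x ↔ x s ≠ 0 := by simp [supp]
  have hinj : Set.InjOn supp P := by
    intro x hx y hy hxy
    funext s
    by_cases hxs : x s = 0
    · have hys : y s = 0 := by simpa [hsupp, hxs] using (Finset.ext_iff.mp hxy s).symm
      rw [hxs, hys]
    · exact hagree x hx y hy s hxs ((hsupp y s).mp (hxy ▸ (hsupp x s).mpr hxs))
  rw [← Finset.card_image_of_injOn hinj]
  refine Finset.card_le_of_traces_chain _ ?_ ?_
  · simp only [Finset.mem_image]
    rintro _ ⟨x, hx, rfl⟩
    obtain ⟨s, hs⟩ := Function.ne_iff.mp (hne x hx)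
    exact ⟨s, (hsupp x s).mpr hs⟩
  · simp only [Finset.mem_image]
    rintro _ ⟨x, hx, rfl⟩ _ ⟨y, hy, rfl⟩ _ ⟨z, hz, rfl⟩
    simpa [Finset.subset_iff, hsupp, and_imp] using hchain x hx y hy z hz

theorem Int.mem_range_signTypeCast_iff {z : ℤ} :
    z ∈ Set.range (SignType.cast : SignType → ℤ) ↔ z = -1 ∨ z = 0 ∨ z = 1 := by
  constructor
  · rintro ⟨s, rfl⟩
    cases s <;> simp
  · rintro (rfl | rfl | rfl)
    exacts [⟨-1, rfl⟩, ⟨0, rfl⟩, ⟨1, rfl⟩]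

def columnMatrix {ι R : Type*} (C : Finset (ι → R)) : Matrix ι C R :=
  Matrix.of fun i c => (c : ι → R) i

@[simp]
theorem columnMatrix_apply {ι R : Type*} (C : Finset (ι → R)) (i : ι) (c : C) :
    columnMatrix C i c = (c : ι → R) i :=
  rfl

namespace Matrix.IsTotallyUnimodular

theorem columnMatrix_image_transpose {ι κ : Type*} [Fintype κ] [DecidableEq (ι → ℤ)]
    {M : Matrix ι κ ℤ} (hM : M.IsTotallyUnimodular) :
    (columnMatrix (Finset.univ.image Mᵀ)).IsTotallyUnimodular := by
  have hlift : ∀ c : Finset.univ.image Mᵀ, ∃ j, Mᵀ j = c := fun c => by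
    simpa using Finset.mem_image.mp c.2
  choose lift hlift using hlift
  have heq : columnMatrix (Finset.univ.image Mᵀ) = M.submatrix id lift := by
    ext i c
    simp [← hlift c]
  exact heq ▸ hM.submatrix id lift

variable {ι : Type*} {C : Finset (ι → ℤ)} (hC : (columnMatrix C).IsTotallyUnimodular)
include hC

theorem columnMatrix_trichotomy {v : ι → ℤ} (hv : v ∈ C) (i : ι) :
    v i = -1 ∨ v i = 0 ∨ v i = 1 :=
  Int.mem_range_signTypeCast_iff.mp (hC.apply i ⟨v, hv⟩)

theorem columnMatrix_det_two_trichotomy {v w : ι → ℤ} (hv : v ∈ C) (hw : w ∈ C) (i j : ι) :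
    v i * w j - w i * v j = -1 ∨ v i * w j - w i * v j = 0 ∨ v i * w j - w i * v j = 1 := by
  have hdet := (isTotallyUnimodular_iff _).mp hC 2 ![i, j] ![⟨v, hv⟩, ⟨w, hw⟩]
  rw [det_fin_two] at hdet
  simpa using Int.mem_range_signTypeCast_iff.mp hdet

end Matrix.IsTotallyUnimodular

section Layers

variable {m : ℕ} {C : Finset (Fin (m + 1) → ℤ)}

noncomputable def layer (C : Finset (Fin (m + 1) → ℤ)) (δ : ℤ) : Finset (Fin m → ℤ) :=
  C.preimage (fun x : Fin m → ℤ => (Fin.snoc x δ : Fin (m + 1) → ℤ))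
    (Fin.snoc_left_injective (α := fun _ => ℤ) δ).injOn

@[simp]
theorem mem_layer {δ : ℤ} {x : Fin m → ℤ} : x ∈ layer C δ ↔ Fin.snoc x δ ∈ C :=
  Finset.mem_preimage

theorem card_layer (δ : ℤ) : (layer C δ).card = (C.filter (· (Fin.last m) = δ)).card := by
  refine Finset.card_nbij' (Fin.snoc · δ) Fin.init ?_ ?_ ?_ ?_ <;> intro x hx
  · simpa using hx
  · simp only [Finset.coe_filter, Set.mem_ofPred_eq] at hx
    simpa [← hx.2] using hx.1
  · simp
  · simp only [Finset.coe_filter, Set.mem_ofPred_eq] at hx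
    simp [← hx.2]

theorem layer_subset (δ : ℤ) :
    layer C δ ⊆ Finset.univ.image ((columnMatrix C).submatrix Fin.castSucc id)ᵀ := by
  intro x hx
  exact Finset.mem_image.mpr ⟨⟨_, mem_layer.mp hx⟩, Finset.mem_univ _, funext fun i => by simp⟩

variable (hC : (columnMatrix C).IsTotallyUnimodular)
include hC

theorem card_eq_card_layer_add :
    C.card = (layer C (-1)).card + (layer C 0).card + (layer C 1).card := by
  have hmaps : (C : Set (Fin (m + 1) → ℤ)).MapsTo (· (Fin.last m)) ({-1, 0, 1} : Finset ℤ) :=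
    fun v hv => by simpa using hC.columnMatrix_trichotomy hv (Fin.last m)
  rw [Finset.card_eq_sum_card_fiberwise hmaps, Finset.sum_insert (by decide),
    Finset.sum_insert (by decide), Finset.sum_singleton, card_layer, card_layer, card_layer,
    add_assoc]

theorem layer_neg_one_inter_layer_one_subset : layer C (-1) ∩ layer C 1 ⊆ {0} := by
  intro b hb
  obtain ⟨hneg, hpos⟩ := Finset.mem_inter.mp hb
  refine Finset.mem_singleton.mpr (funext fun s => ?_)
  have hdet := hC.columnMatrix_det_two_trichotomy (mem_layer.mp hneg) (mem_layer.mp hpos)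
    s.castSucc (Fin.last m)
  simp only [Fin.snoc_castSucc, Fin.snoc_last] at hdet
  simp only [Pi.zero_apply]
  omega

theorem layer_apply_eq {δ : ℤ} (hδ : δ ≠ 0) {x y : Fin m → ℤ} (hx : x ∈ layer C δ)
    (hy : y ∈ layer C δ) {s : Fin m} (hxs : x s ≠ 0) (hys : y s ≠ 0) : x s = y s := by
  have hxs' := hC.columnMatrix_trichotomy (mem_layer.mp hx) s.castSucc
  have hys' := hC.columnMatrix_trichotomy (mem_layer.mp hy) s.castSucc
  have hdet := hC.columnMatrix_det_two_trichotomy (mem_layer.mp hx) (mem_layer.mp hy)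
    s.castSucc (Fin.last m)
  simp only [Fin.snoc_castSucc, Fin.snoc_last] at hdet hxs' hys'
  rcases hxs' with h | h | h <;> rcases hys' with h' | h' | h' <;> rw [h, h'] at hdet ⊢ <;> omega

theorem layer_supports_chain {δ : ℤ} (hδ : δ ≠ 0) {x y z : Fin m → ℤ} (hx₀ : x ∈ layer C 0)
    (hx : x ∈ layer C δ) (hy : y ∈ layer C δ) (hz : z ∈ layer C δ) :
    (∀ s, y s ≠ 0 → x s ≠ 0 → z s ≠ 0) ∨ (∀ s, z s ≠ 0 → x s ≠ 0 → y s ≠ 0) := by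
  by_contra! ⟨⟨s, hys, hxs, hzs⟩, ⟨t, hzt, hxt, hyt⟩⟩
  have hys' := hC.columnMatrix_trichotomy (mem_layer.mp hy) s.castSucc
  have hzt' := hC.columnMatrix_trichotomy (mem_layer.mp hz) t.castSucc
  -- the minor on rows `s, t, last` and columns `(y, δ), (z, δ), (x, 0)` is `-2 δ (y s) (z t)`
  have hdet := Int.mem_range_signTypeCast_iff.mp <| (isTotallyUnimodular_iff _).mp hC 3
    ![s.castSucc, t.castSucc, Fin.last m]
    ![⟨_, mem_layer.mp hy⟩, ⟨_, mem_layer.mp hz⟩, ⟨_, mem_layer.mp hx₀⟩]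
  rw [det_fin_three] at hdet
  simp only [submatrix_apply, cons_val_zero, cons_val_one, cons_val, columnMatrix_apply,
    Fin.snoc_castSucc, Fin.snoc_last, mul_zero, zero_sub, sub_zero] at hdet hys' hzt'
  rw [hzs, hyt, layer_apply_eq hC hδ hx hy hxs hys, layer_apply_eq hC hδ hx hz hxt hzt] at hdet
  rcases hys' with h | h | h <;> rcases hzt' with h' | h' | h' <;> rw [h, h'] at hdet <;> omega

theorem card_erase_zero_layer_inter_le {δ : ℤ} (hδ : δ ≠ 0) :
    ((layer C 0 ∩ layer C δ).erase 0).card ≤ m := by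
  refine (card_le_of_agree_of_supports_chain _ ?_ ?_ ?_).trans_eq (Fintype.card_fin m)
  all_goals simp only [Finset.mem_erase, Finset.mem_inter]
  · exact fun x hx => hx.1
  · exact fun x hx y hy s => layer_apply_eq hC hδ hx.2.2 hy.2.2
  · exact fun x hx y hy z hz => layer_supports_chain hC hδ hx.2.1 hx.2.2 hy.2.2 hz.2.2

theorem card_layer_zero_inter_le :
    (layer C 0 ∩ (layer C (-1) ∪ layer C 1)).card ≤ m + m + 1 := by
  have hsub : layer C 0 ∩ (layer C (-1) ∪ layer C 1) ⊆
      insert 0 ((layer C 0 ∩ layer C (-1)).erase 0 ∪ (layer C 0 ∩ layer C 1).erase 0) := by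
    intro x hx
    simp only [Finset.mem_insert, Finset.mem_union, Finset.mem_erase, Finset.mem_inter] at hx ⊢
    tauto
  calc _ ≤ _ := Finset.card_le_card hsub
    _ ≤ _ + 1 := Finset.card_insert_le _ _
    _ ≤ m + m + 1 := by
      grw [Finset.card_union_le, card_erase_zero_layer_inter_le hC (by norm_num),
        card_erase_zero_layer_inter_le hC (by norm_num)]

end Layers

theorem card_le_of_isTotallyUnimodular_columnMatrix {m : ℕ} {C : Finset (Fin m → ℤ)}
    (hC : (columnMatrix C).IsTotallyUnimodular) : C.card ≤ m * m + m + 1 := by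
  induction m with
  | zero => exact (Finset.card_le_one_of_subsingleton C).trans (by norm_num)
  | succ m ih =>
    classical
    set D := Finset.univ.image ((columnMatrix C).submatrix Fin.castSucc id)ᵀ
    have hD : D.card ≤ m * m + m + 1 :=
      ih (hC.submatrix Fin.castSucc id).columnMatrix_image_transpose
    have hunion : (layer C 0 ∪ (layer C (-1) ∪ layer C 1)).card ≤ D.card :=
      Finset.card_le_card <| Finset.union_subset (layer_subset 0)
        (Finset.union_subset (layer_subset _) (layer_subset 1))
    have hsign : (layer C (-1) ∩ layer C 1).card ≤ 1 :=
      Finset.card_le_card (layer_neg_one_inter_layer_one_subset hC)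
    have hzero := card_layer_zero_inter_le hC
    have hlayers := card_eq_card_layer_add hC
    have hincl₀ := Finset.card_union_add_card_inter (layer C 0) (layer C (-1) ∪ layer C 1)
    have hincl₁ := Finset.card_union_add_card_inter (layer C (-1)) (layer C 1)
    nlinarith

theorem Matrix.IsTotallyUnimodular.card_le_of_injective_transpose {ι κ : Type*} [Fintype ι]
    [Fintype κ] {M : Matrix ι κ ℤ} (hM : M.IsTotallyUnimodular) (hinj : Function.Injective Mᵀ) :
    Fintype.card κ ≤ Fintype.card ι * Fintype.card ι + Fintype.card ι + 1 := by
  classical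
  set e := Fintype.equivFin ι
  set M' := M.submatrix e.symm id
  have hinj' : Function.Injective M'ᵀ := fun j j' h =>
    hinj (funext fun i => by simpa [M'] using congrFun h (e i))
  calc Fintype.card κ = (Finset.univ.image M'ᵀ).card := by
        rw [Finset.card_image_of_injective _ hinj', Finset.card_univ]
    _ ≤ _ := card_le_of_isTotallyUnimodular_columnMatrix
        (hM.submatrix e.symm id).columnMatrix_image_transpose

open Matrix Set

theorem master_knapsack_affine_TU_dimension_lower_bound_general
    (n : ℕ) (a : Fin n → ℤ) (ha : ∀ j, a j = (j : ℕ) + 1)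
    (k : ℕ) (atilde : Fin n → ℤ) (u : Fin k → ℤ) (W : Matrix (Fin k) (Fin n) ℤ)
    (hdecomp : ∀ j, a j = atilde j + Matrix.vecMul u W j)
    (hTU : (Matrix.fromRows (Matrix.of fun (_ : Fin 1) j => atilde j) W).IsTotallyUnimodular) :
    Real.sqrt n - 2 ≤ (k : ℝ) := by
  set M := Matrix.fromRows (Matrix.of fun (_ : Fin 1) j => atilde j) W
  have ha_col : ∀ j, a j = Mᵀ j (Sum.inl 0) + ∑ i, u i * Mᵀ j (Sum.inr i) := fun j => by
    simp [M, hdecomp, vecMul, dotProduct]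
  have hinj : Function.Injective Mᵀ := fun j j' h => by
    have := ha_col j
    rw [h, ← ha_col j', ha j, ha j'] at this
    exact Fin.ext (by omega)
  have hcard := hTU.card_le_of_injective_transpose hinj
  simp only [Fintype.card_fin, Fintype.card_sum] at hcard
  rw [sub_le_iff_le_add, Real.sqrt_le_left (by positivity)]
  exact_mod_cast (show n ≤ (k + 2) ^ 2 by nlinarith)

/-- **Lower bound on the affine TU-dimension of the master knapsack vector.**
If the row vector `aᵀ = [1, 2, …, n]` admits a `k`-row affine TU decomposition
`aᵀ = ãᵀ + uᵀ W`, then `k ≥ √n - 2`. -/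
theorem master_knapsack_affine_TU_dimension_lower_bound
    (n : ℕ) (hn : 1 ≤ n) (a : Fin n → ℤ) (ha : ∀ j, a j = (j : ℕ) + 1)
    (k : ℕ) (atilde : Fin n → ℤ) (u : Fin k → ℤ) (W : Matrix (Fin k) (Fin n) ℤ)
    (hatilde : ∀ j, atilde j ∈ ({-1, 0, 1} : Set ℤ))
    (hW : ∀ i j, W i j ∈ ({-1, 0, 1} : Set ℤ))
    (hdecomp : ∀ j, a j = atilde j + Matrix.vecMul u W j)
    (hTU : (Matrix.fromRows (Matrix.of fun (_ : Fin 1) j => atilde j) W).IsTotallyUnimodular) :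
    Real.sqrt n - 2 ≤ (k : ℝ) :=
  master_knapsack_affine_TU_dimension_lower_bound_general n a ha k atilde u W hdecomp hTU
end

section
/- Let n ≥ 1 and a^T = [2, 2², …, 2ⁿ]. Then the affine TU-dimension of a^T is exactly n: a^T admits an n-row affine TU decomposition (with W the identity matrix), but for every k < n there is no k-row affine TU decomposition of a^T; i.e., there exist no ã ∈ {0,±1}^n, u ∈ ℤ^k, and W ∈ {0,±1}^{k×n} with k < n such that a^T = ã^T + u^T W and the stacking of ã^T on top of W is totally unimodular. -/
/-!
The upper bound is the decomposition `ã = 0`, `u = a`, `W = 1`. For the lower bound write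
`a = v ᵥ* M` with `M = [ãᵀ; W]` totally unimodular and `v = (1, u)`. Border a nonsingular
`s × s` minor of `M` by a new column `x` and by the row `a`: expanding along `a`, the bordered
determinant is a `{0, ±1}`-combination of distinct powers of two in which the coefficient of
`a x` is `± det` of the minor, hence it is nonzero by uniqueness of binary expansions. By
linearity in the row `a`, some row of `M` then extends the minor. So `M` has a nonsingular
`n × n` minor and at least `n` rows; with exactly `n` rows this minor is unimodular, which is
impossible modulo `2`, since `a ≡ 0` while `v` has the entry `1`.
-/

open Matrix Set

open Finset in
theorem eq_zero_of_sum_sign_mul_two_pow_eq_zero {ι : Type*} [Fintype ι] {e : ι → ℕ}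
    (he : Function.Injective e) {c : ι → ℤ} (hc : ∀ i, c i ∈ Set.range SignType.cast)
    (h : ∑ i, c i * 2 ^ e i = 0) : c = 0 := by
  classical
  set P := univ.filter (c · = 1)
  set N := univ.filter (c · = -1)
  have hsplit :
      ∑ i, c i * 2 ^ e i = ∑ i ∈ P, (2 : ℤ) ^ e i - ∑ i ∈ N, (2 : ℤ) ^ e i := by
    rw [sum_filter, sum_filter, ← sum_sub_distrib]
    refine sum_congr rfl fun i _ => ?_
    obtain ⟨s, hs⟩ := hc i
    cases s <;> simp [← hs]
  have hPN : P = N := by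
    refine image_injective he (geomSum_injective le_rfl ?_)
    simp only [sum_image he.injOn]
    exact_mod_cast sub_eq_zero.mp (hsplit ▸ h)
  funext i
  have hi : c i = 1 ↔ c i = -1 := by simpa [P, N] using congrArg (i ∈ ·) hPN
  obtain ⟨s, hs⟩ := hc i
  cases s <;> simp [← hs] at hi ⊢

namespace Matrix

variable {m n R : Type*} [CommRing R]

lemma isTotallyUnimodular_zero : (0 : Matrix m n R).IsTotallyUnimodular := by
  intro k _ _ _ _
  cases k with
  | zero => exact ⟨1, by simp⟩
  | succ k => exact ⟨0, by simp⟩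

variable {k : ℕ} {M : Matrix m n R} {f : Fin k → m} {g : Fin k → n}

lemma injective_row_of_det_submatrix_ne_zero (h : (M.submatrix f g).det ≠ 0) :
    Function.Injective f := by
  intro i j hij
  by_contra hne
  exact h (det_zero_of_row_eq hne (funext fun _ => by simp [hij]))

lemma injective_col_of_det_submatrix_ne_zero (h : (M.submatrix f g).det ≠ 0) :
    Function.Injective g :=
  injective_row_of_det_submatrix_ne_zero (M := Mᵀ)
    (by rwa [← transpose_submatrix, det_transpose])

lemma det_submatrix_cons (M : Matrix m n R) (i : m) (f : Fin k → m) (g : Fin (k + 1) → n) :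
    (M.submatrix (Fin.cons i f) g).det = ∑ j : Fin (k + 1),
      (-1) ^ (j : ℕ) * M i (g j) * (M.submatrix f (g ∘ j.succAbove)).det := by
  rw [det_succ_row_zero]
  rfl

theorem prime_dvd_det_of_dvd_vecMul {ι : Type*} [Fintype ι] [DecidableEq ι] {p : ℕ}
    [Fact p.Prime] (A : Matrix ι ι ℤ) {w : ι → ℤ} (hw : ∃ i, ¬ (p : ℤ) ∣ w i)
    (h : ∀ j, (p : ℤ) ∣ (w ᵥ* A) j) : (p : ℤ) ∣ A.det := by
  rw [← ZMod.intCast_zmod_eq_zero_iff_dvd, Int.cast_det, ← exists_vecMul_eq_zero_iff]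
  obtain ⟨i, hi⟩ := hw
  refine ⟨Int.castRingHom (ZMod p) ∘ w, fun h0 => hi ?_, funext fun j => ?_⟩
  · simpa [ZMod.intCast_zmod_eq_zero_iff_dvd] using congrFun h0 i
  · rw [Pi.zero_apply, ← Int.coe_castRingHom, ← RingHom.map_vecMul]
    simpa [ZMod.intCast_zmod_eq_zero_iff_dvd] using h j

end Matrix

namespace Matrix.IsTotallyUnimodular

open Finset

variable {m n : Type*} [Fintype m] {M : Matrix m n ℤ} {v : m → ℤ} {e : n → ℕ}

theorem exists_det_submatrix_cons_ne_zero (hM : M.IsTotallyUnimodular)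
    (he : Function.Injective e) (hv : v ᵥ* M = fun j => 2 ^ e j) {k : ℕ} {f : Fin k → m}
    {g : Fin k → n} (hfg : (M.submatrix f g).det ≠ 0) {x : n} (hx : x ∉ Set.range g) :
    ∃ i, (M.submatrix (Fin.cons i f) (Fin.cons x g)).det ≠ 0 := by
  by_contra! h
  set g' : Fin (k + 1) → n := Fin.cons x g
  have hg' : Function.Injective g' :=
    Fin.cons_injective_iff.mpr ⟨hx, injective_col_of_det_submatrix_ne_zero hfg⟩
  have hsum : ∑ j : Fin (k + 1),
      (-1) ^ (j : ℕ) * (M.submatrix f (g' ∘ j.succAbove)).det * 2 ^ e (g' j) = 0 :=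
    calc _ = ∑ i, v i * (M.submatrix (Fin.cons i f) g').det := by
          simp_rw [det_submatrix_cons, mul_sum]
          rw [sum_comm]
          refine sum_congr rfl fun j _ => ?_
          rw [← congrFun hv (g' j)]
          simp only [vecMul, dotProduct, mul_sum]
          exact sum_congr rfl fun i _ => by ring
      _ = 0 := by simp [h]
  have hminors := eq_zero_of_sum_sign_mul_two_pow_eq_zero (he.comp hg') (fun j => ?_) hsum
  · exact hfg (by simpa [g'] using congrFun hminors 0)
  · obtain ⟨s, hs⟩ := (isTotallyUnimodular_iff M).mp hM k f (g' ∘ j.succAbove)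
    exact ⟨(-1) ^ (j : ℕ) * s, by simp [hs]⟩

theorem exists_det_submatrix_ne_zero [Fintype n] (hM : M.IsTotallyUnimodular)
    (he : Function.Injective e) (hv : v ᵥ* M = fun j => 2 ^ e j) :
    ∃ (f : Fin (Fintype.card n) → m) (g : Fin (Fintype.card n) → n),
      (M.submatrix f g).det ≠ 0 := by
  suffices ∀ k ≤ Fintype.card n,
      ∃ (f : Fin k → m) (g : Fin k → n), (M.submatrix f g).det ≠ 0 from this _ le_rfl
  intro k hk
  induction k with
  | zero => exact ⟨Fin.elim0, Fin.elim0, by simp⟩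
  | succ k ih =>
    obtain ⟨f, g, hfg⟩ := ih (by omega)
    obtain ⟨x, hx⟩ : ∃ x, x ∉ Set.range g := by
      by_contra! hg
      have := Fintype.card_le_of_surjective g hg
      rw [Fintype.card_fin] at this
      omega
    obtain ⟨i, hi⟩ := hM.exists_det_submatrix_cons_ne_zero he hv hfg hx
    exact ⟨_, _, hi⟩

theorem card_lt_card_of_vecMul_eq_two_pow [Fintype n]
    (hM : M.IsTotallyUnimodular) (he : Function.Injective e) (he0 : ∀ j, e j ≠ 0)
    (hv : v ᵥ* M = fun j => 2 ^ e j) (hodd : ∃ i, ¬ 2 ∣ v i) :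
    Fintype.card n < Fintype.card m := by
  obtain ⟨f, g, hdet⟩ := hM.exists_det_submatrix_ne_zero he hv
  have hle := Fintype.card_le_of_injective f (injective_row_of_det_submatrix_ne_zero hdet)
  rw [Fintype.card_fin] at hle
  refine hle.lt_of_ne fun hcard => ?_
  have hf : Function.Bijective f :=
    (Fintype.bijective_iff_injective_and_card f).mpr
      ⟨injective_row_of_det_submatrix_ne_zero hdet, by simpa using hcard⟩
  set σ := Equiv.ofBijective f hf
  have hvσ : (v ∘ σ) ᵥ* M.submatrix σ g = fun j => 2 ^ e (g j) := by
    rw [submatrix_vecMul_equiv, Function.comp_assoc, σ.self_comp_symm, Function.comp_id, hv]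
    rfl
  have h2 : (2 : ℤ) ∣ (M.submatrix σ g).det := by
    refine prime_dvd_det_of_dvd_vecMul (p := 2) (w := v ∘ σ) _ ?_ fun j => ?_
    · obtain ⟨i, hi⟩ := hodd
      exact ⟨σ.symm i, by simpa using hi⟩
    · simp [hvσ, he0]
  obtain ⟨s, hs⟩ := (isTotallyUnimodular_iff M).mp hM _ σ g
  change (M.submatrix σ g).det ≠ 0 at hdet
  rw [← hs] at hdet h2
  cases s <;> simp at hdet h2

end Matrix.IsTotallyUnimodular

theorem powers_of_two_affine_TU_dimension_eq_n_general
    (n : ℕ) (a : Fin n → ℤ) (ha : ∀ j, a j = 2 ^ ((j : ℕ) + 1)) :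
    (∃ (atilde : Fin n → ℤ) (u : Fin n → ℤ),
      (∀ j, atilde j ∈ ({-1, 0, 1} : Set ℤ)) ∧
      (∀ j, a j = atilde j + Matrix.vecMul u (1 : Matrix (Fin n) (Fin n) ℤ) j) ∧
      (Matrix.fromRows (Matrix.of fun (_ : Fin 1) j => atilde j)
        (1 : Matrix (Fin n) (Fin n) ℤ)).IsTotallyUnimodular)
    ∧
    ∀ k < n, ¬ ∃ (atilde : Fin n → ℤ) (u : Fin k → ℤ) (W : Matrix (Fin k) (Fin n) ℤ),
      (∀ j, atilde j ∈ ({-1, 0, 1} : Set ℤ)) ∧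
      (∀ i j, W i j ∈ ({-1, 0, 1} : Set ℤ)) ∧
      (∀ j, a j = atilde j + Matrix.vecMul u W j) ∧
      (Matrix.fromRows (Matrix.of fun (_ : Fin 1) j => atilde j) W).IsTotallyUnimodular := by
  refine ⟨⟨0, a, fun _ => by simp, fun _ => by simp, ?_⟩, ?_⟩
  · exact (fromRows_one_isTotallyUnimodular_iff _).mpr isTotallyUnimodular_zero
  rintro k hk ⟨atilde, u, W, -, -, hrep, hTU⟩
  have hv : Sum.elim 1 u ᵥ* fromRows (of fun (_ : Fin 1) j => atilde j) W =
      fun j : Fin n => 2 ^ ((j : ℕ) + 1) := by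
    funext j
    rw [sumElim_vecMul_fromRows, ← ha, hrep]
    simp [vecMul, dotProduct]
  have := hTU.card_lt_card_of_vecMul_eq_two_pow ((add_left_injective 1).comp Fin.val_injective)
    (fun _ => Nat.succ_ne_zero _) hv ⟨Sum.inl 0, by simp⟩
  simp only [Fintype.card_fin, Fintype.card_sum] at this
  omega

/-- **The affine TU-dimension of `[2, 2², …, 2ⁿ]` is exactly `n`.**
The vector admits an `n`-row affine TU decomposition with `W` the identity matrix,
but admits no `k`-row affine TU decomposition for any `k < n`. -/
theorem powers_of_two_affine_TU_dimension_eq_n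
    (n : ℕ) (hn : 1 ≤ n) (a : Fin n → ℤ) (ha : ∀ j, a j = 2 ^ ((j : ℕ) + 1)) :
    (∃ (atilde : Fin n → ℤ) (u : Fin n → ℤ),
      (∀ j, atilde j ∈ ({-1, 0, 1} : Set ℤ)) ∧
      (∀ j, a j = atilde j + Matrix.vecMul u (1 : Matrix (Fin n) (Fin n) ℤ) j) ∧
      (Matrix.fromRows (Matrix.of fun (_ : Fin 1) j => atilde j)
        (1 : Matrix (Fin n) (Fin n) ℤ)).IsTotallyUnimodular)
    ∧
    ∀ k < n, ¬ ∃ (atilde : Fin n → ℤ) (u : Fin k → ℤ) (W : Matrix (Fin k) (Fin n) ℤ),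
      (∀ j, atilde j ∈ ({-1, 0, 1} : Set ℤ)) ∧
      (∀ i j, W i j ∈ ({-1, 0, 1} : Set ℤ)) ∧
      (∀ j, a j = atilde j + Matrix.vecMul u W j) ∧
      (Matrix.fromRows (Matrix.of fun (_ : Fin 1) j => atilde j) W).IsTotallyUnimodular :=
  powers_of_two_affine_TU_dimension_eq_n_general n a ha
end

section
/- For i = 1, …, r let A^i ∈ ℤ^{m_i×n_i} and Ā^i ∈ ℤ^{k_i×n_i} be such that the stacked matrix [A^i; Ā^i] is totally unimodular, and let U^i ∈ ℤ^{k×k_i}. Set M = m_1 + … + m_r and let A be the (M+k)×(n_1+…+n_r) matrix whose first M rows form the block-diagonal matrix diag(A^1,…,A^r) and whose last k rows are [U^1Ā^1, U^2Ā^2, …, U^rĀ^r]. Then A admits a (k_1+…+k_r)-row affine TU decomposition, namely A = Ã + UW with W = diag(Ā^1,…,Ā^r), U the matrix whose first M rows are zero and whose last k rows are [U^1, U^2, …, U^r], and Ã = A − UW; in particular the matrix obtained by stacking Ã on top of W is totally unimodular. -/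
open Matrix Set

/-!
The lower rows of `A` are exactly `U W`, so `Ã = A - U W` is `diag(A¹,…,Aʳ)` on top of zero rows,
and `[Ã; W]` is, up to a permutation of rows and some zero rows, the block-diagonal matrix
`diag([A¹; Ā¹],…,[Aʳ; Āʳ])`. A block-diagonal matrix with totally unimodular blocks is totally
unimodular: in a square submatrix, either some block contributes more rows than columns, and then
every term of the Leibniz expansion vanishes, or a permutation of its rows makes it block diagonal
with square submatrices of the blocks on the diagonal.
-/

namespace Matrix

section BlockDiagonal

variable {ι R : Type*} [DecidableEq ι] [CommRing R] {m n : ι → Type*}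
  (M : ∀ i, Matrix (m i) (n i) R)

lemma blockDiagonal'_apply_eq_cast (a : ι) (p : Σ i, m i) (q : Σ i, n i)
    (hp : p.1 = a) (hq : q.1 = a) :
    blockDiagonal' M p q = M a (cast (congrArg m hp) p.2) (cast (congrArg n hq) q.2) := by
  obtain ⟨_, _⟩ := p
  obtain ⟨_, _⟩ := q
  cases hp
  cases hq
  exact blockDiagonal'_apply_eq M _ _ _

lemma det_submatrix_blockDiagonal'_eq_zero {s : ℕ} (f : Fin s → Σ i, m i)
    (g : Fin s → Σ i, n i) (h : ∀ σ : Equiv.Perm (Fin s), ∃ x, (f (σ x)).1 ≠ (g x).1) :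
    ((blockDiagonal' M).submatrix f g).det = 0 := by
  rw [det_apply]
  refine Finset.sum_eq_zero fun σ _ => ?_
  obtain ⟨x, hx⟩ := h σ
  rw [Finset.prod_eq_zero (Finset.mem_univ x) (blockDiagonal'_apply_ne M _ _ hx), smul_zero]

lemma det_submatrix_blockDiagonal'_mem_range_of_fst_eq
    (hM : ∀ i, (M i).IsTotallyUnimodular) {s : ℕ} (f : Fin s → Σ i, m i)
    (g : Fin s → Σ i, n i) (hfg : ∀ x, (f x).1 = (g x).1) :
    ((blockDiagonal' M).submatrix f g).det ∈ range SignType.cast := by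
  -- the submatrix is block diagonal, so any linear order on `ι` will do
  let : LinearOrder ι := WellOrderingRel.isWellOrder.linearOrder
  set b : Fin s → ι := fun x => (g x).1
  have hblock : ((blockDiagonal' M).submatrix f g).BlockTriangular b := fun x y hxy =>
    blockDiagonal'_apply_ne M _ _ ((hfg x).trans_ne hxy.ne')
  rw [hblock.det]
  change _ ∈ MonoidHom.mrange SignType.castHom.toMonoidHom
  refine prod_mem fun a _ => ?_
  have hsub : ((blockDiagonal' M).submatrix f g).toSquareBlock b a =
      (M a).submatrix (fun x : {x // b x = a} => cast (congrArg m ((hfg x).trans x.2)) (f x).2)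
        (fun x : {x // b x = a} => cast (congrArg n x.2) (g x).2) := by
    ext x y
    exact blockDiagonal'_apply_eq_cast M a _ _ ((hfg x).trans x.2) y.2
  rw [hsub]
  exact (isTotallyUnimodular_iff_fintype (M a)).mp (hM a) _ _ _

theorem blockDiagonal'_isTotallyUnimodular (hM : ∀ i, (M i).IsTotallyUnimodular) :
    (blockDiagonal' M).IsTotallyUnimodular := by
  rw [isTotallyUnimodular_iff]
  intro s f g
  by_cases hσ : ∃ σ : Equiv.Perm (Fin s), ∀ x, (f (σ x)).1 = (g x).1
  · obtain ⟨σ, hσ⟩ := hσ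
    obtain ⟨t, ht⟩ := det_submatrix_blockDiagonal'_mem_range_of_fst_eq M hM (f ∘ σ) g hσ
    have hperm := det_permute σ ((blockDiagonal' M).submatrix f g)
    rw [submatrix_submatrix, Function.comp_id] at hperm
    rcases Int.units_eq_one_or (Equiv.Perm.sign σ) with hsign | hsign <;>
      simp only [hsign, Units.val_one, Units.val_neg, Int.cast_one, Int.cast_neg, one_mul,
        neg_one_mul] at hperm
    · exact ⟨t, ht.trans hperm⟩
    · exact ⟨-t, by rw [SignType.coe_neg, ht, hperm, neg_neg]⟩
  · push Not at hσ
    exact ⟨0, (det_submatrix_blockDiagonal'_eq_zero M f g hσ).symm⟩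

end BlockDiagonal

lemma of_sigma_mul_blockDiagonal' {ι R l : Type*} [Fintype ι] [DecidableEq ι] [CommRing R]
    {k n : ι → Type*} [∀ i, Fintype (k i)] (U : ∀ i, Matrix l (k i) R)
    (B : ∀ i, Matrix (k i) (n i) R) :
    of (fun a (q : Σ i, k i) => U q.1 a q.2) * blockDiagonal' B =
      of fun a (q : Σ i, n i) => (U q.1 * B q.1) a q.2 := by
  ext a ⟨j, q⟩
  rw [mul_apply, Fintype.sum_sigma, Fintype.sum_eq_single j fun j' hj' =>
    Finset.sum_eq_zero fun _ _ => by rw [blockDiagonal'_apply_ne B _ _ hj', mul_zero]]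
  simp only [of_apply, blockDiagonal'_apply_eq, mul_apply]

lemma fromRows_blockDiagonal' {ι R : Type*} [DecidableEq ι] [Zero R] {m k n : ι → Type*}
    (A : ∀ i, Matrix (m i) (n i) R) (B : ∀ i, Matrix (k i) (n i) R) :
    fromRows (blockDiagonal' A) (blockDiagonal' B) =
      (blockDiagonal' fun i => fromRows (A i) (B i)).submatrix
        (Equiv.sigmaSumDistrib m k).symm id := by
  ext (⟨i, p⟩ | ⟨i, p⟩) ⟨j, q⟩ <;>
  · by_cases h : i = j
    · subst h
      simp [blockDiagonal'_apply_eq, Sigma.map]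
    · simp [blockDiagonal'_apply_ne _ _ _ h, Sigma.map]

lemma fromRows_sub_fromRows_zero_left {m m' n R : Type*} [AddGroup R] (A : Matrix m n R)
    (B : Matrix m' n R) : fromRows A B - fromRows 0 B = fromRows A 0 := by
  ext (_ | _) _ <;> simp

lemma IsTotallyUnimodular.fromRows_fromRows_zero {m m' m'' n R : Type*} [CommRing R]
    {A : Matrix m n R} {B : Matrix m'' n R} (h : (fromRows A B).IsTotallyUnimodular) :
    (fromRows (fromRows A (0 : Matrix m' n R)) B).IsTotallyUnimodular := by
  convert ((fromRows_replicateRow0_isTotallyUnimodular_iff (m' := m') _).2 h).submatrix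
    (Sum.elim (Sum.elim (Sum.inl ∘ Sum.inl) Sum.inr) (Sum.inl ∘ Sum.inr)) id using 1
  ext ((_ | _) | _) _ <;> rfl

end Matrix

/-- **Block TU structure.** If each stacked matrix `[Aⁱ; Āⁱ]` is totally unimodular, then
the matrix `A` with block-diagonal upper part `diag(A¹,…,Aʳ)` and lower part
`[U¹Ā¹, …, UʳĀʳ]` admits a `(k₁ + … + k_r)`-row affine TU decomposition `A = Ã + U W`
with `W = diag(Ā¹,…,Āʳ)` and `U` having zero rows on top and `[U¹, …, Uʳ]` below;
in particular the stacking of `Ã = A - U W` on top of `W` is totally unimodular. -/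
theorem block_TU_structure_affine_TU_decomposition
    (r k : ℕ) (mdim ndim kdim : Fin r → ℕ)
    (A : ∀ i, Matrix (Fin (mdim i)) (Fin (ndim i)) ℤ)
    (Abar : ∀ i, Matrix (Fin (kdim i)) (Fin (ndim i)) ℤ)
    (U : ∀ i, Matrix (Fin k) (Fin (kdim i)) ℤ)
    (hTU : ∀ i, (Matrix.fromRows (A i) (Abar i)).IsTotallyUnimodular) :
    (Matrix.fromRows
      ((Matrix.fromRows (Matrix.blockDiagonal' A)
          (Matrix.of fun (i : Fin k) (jq : Σ j, Fin (ndim j)) =>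
            (U jq.1 * Abar jq.1) i jq.2))
        - (Matrix.fromRows (0 : Matrix (Σ i, Fin (mdim i)) (Σ i, Fin (kdim i)) ℤ)
            (Matrix.of fun (i : Fin k) (jq : Σ j, Fin (kdim j)) => U jq.1 i jq.2))
          * Matrix.blockDiagonal' Abar)
      (Matrix.blockDiagonal' Abar)).IsTotallyUnimodular := by
  rw [fromRows_mul, of_sigma_mul_blockDiagonal', Matrix.zero_mul]
  rw [fromRows_sub_fromRows_zero_left]
  refine IsTotallyUnimodular.fromRows_fromRows_zero ?_
  rw [fromRows_blockDiagonal']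
  exact (blockDiagonal'_isTotallyUnimodular _ hTU).submatrix _ _
end

section
/- Let A ∈ {0,±1}^{n×n} be almost totally unimodular, i.e., A is not totally unimodular but every proper submatrix of A is totally unimodular. Then A admits a 1-row affine TU decomposition, and consequently the affine TU-dimension of A equals 1. Concretely, writing A = [a, Ā] where a is the first column, the decomposition A = [0, Ā] + a·[1, 0, …, 0] is an affine TU decomposition: the matrix obtained by stacking [0, Ā] on top of the row [1, 0, …, 0] is totally unimodular. -/
/-!
Every square submatrix of `[0, Ā]` either meets the zero column, and then has determinant `0`,
or is a square submatrix of `Ā`, which has only `n` columns and so is a proper submatrix of `A`,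
totally unimodular by almost total unimodularity. Appending the unit row `[1, 0, …, 0]` preserves
total unimodularity (Laplace expansion along that row).
-/

open Matrix Set

namespace Matrix

variable {m n R : Type*} [CommRing R]

lemma isTotallyUnimodular_iff_of_col_eq_zero [DecidableEq n] {A : Matrix m n R} (j₀ : n)
    (hzero : ∀ i, A i j₀ = 0) :
    A.IsTotallyUnimodular ↔
      (A.submatrix id ((↑) : {j // j ≠ j₀} → n)).IsTotallyUnimodular := by
  have hsplit : A = (fromCols (A.submatrix id ((↑) : {j // j ≠ j₀} → n))
      (replicateCol {j // ¬ j ≠ j₀} 0)).reindex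
        (Equiv.refl m) (Equiv.sumCompl (· ≠ j₀)) := by
    ext i j
    by_cases hj : j = j₀
    · subst hj
      simp [hzero]
    · simp [hj]
  conv_lhs => rw [hsplit]
  rw [reindex_isTotallyUnimodular, fromCols_replicateCol0_isTotallyUnimodular_iff]

end Matrix

theorem almost_TU_implies_affine_TU_dimension_one_general
    (n : ℕ) (A : Matrix (Fin (n + 1)) (Fin (n + 1)) ℤ)
    (hproper : ∀ (r s : ℕ) (f : Fin r → Fin (n + 1)) (g : Fin s → Fin (n + 1)),
      Function.Injective f → Function.Injective g → (r < n + 1 ∨ s < n + 1) →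
      (A.submatrix f g).IsTotallyUnimodular) :
    (∀ i j, A i j =
        (if j = 0 then 0 else A i j) + A i 0 * (if j = 0 then 1 else 0)) ∧
    (Matrix.fromRows
      (Matrix.of fun i j => if j = 0 then 0 else A i j)
      (Matrix.of fun (_ : Fin 1) (j : Fin (n + 1)) =>
        if j = 0 then (1 : ℤ) else 0)).IsTotallyUnimodular := by
  refine ⟨fun i j => by split_ifs with hj <;> simp [hj], ?_⟩
  have htail : (A.submatrix id Fin.succ).IsTotallyUnimodular :=
    hproper (n + 1) n id Fin.succ Function.injective_id (Fin.succ_injective _)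
      (Or.inr n.lt_succ_self)
  have hzeroed : (Matrix.of fun i j => if j = 0 then 0 else A i j).IsTotallyUnimodular := by
    rw [isTotallyUnimodular_iff_of_col_eq_zero 0 (fun i => by simp)]
    convert htail.submatrix id (fun j : {j // j ≠ 0} => Fin.pred j.1 j.2) using 1
    ext i j
    simp [j.2]
  refine hzeroed.fromRows_unitlike fun _ _ => ⟨0, 1, funext fun j => ?_⟩
  by_cases hj : j = 0 <;> simp [hj]

/-- **Almost totally unimodular matrices have affine TU-dimension 1.**
If `A` is a square matrix which is not totally unimodular but all of whose proper
submatrices are totally unimodular, then zeroing out the first column of `A` and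
stacking the result on top of the row `[1, 0, …, 0]` gives a totally unimodular
matrix; hence `A = [0, Ā] + a·[1,0,…,0]` is a `1`-row affine TU decomposition of `A`. -/
theorem almost_TU_implies_affine_TU_dimension_one
    (n : ℕ) (A : Matrix (Fin (n + 1)) (Fin (n + 1)) ℤ)
    (hnotTU : ¬ A.IsTotallyUnimodular)
    (hproper : ∀ (r s : ℕ) (f : Fin r → Fin (n + 1)) (g : Fin s → Fin (n + 1)),
      Function.Injective f → Function.Injective g → (r < n + 1 ∨ s < n + 1) →
      (A.submatrix f g).IsTotallyUnimodular) :
    (∀ i j, A i j =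
        (if j = 0 then 0 else A i j) + A i 0 * (if j = 0 then 1 else 0)) ∧
    (Matrix.fromRows
      (Matrix.of fun i j => if j = 0 then 0 else A i j)
      (Matrix.of fun (_ : Fin 1) (j : Fin (n + 1)) =>
        if j = 0 then (1 : ℤ) else 0)).IsTotallyUnimodular :=
  almost_TU_implies_affine_TU_dimension_one_general n A hproper
end

section
/- Let n ≥ 1, let b ∈ ℤ^n have all entries positive, and set a = 2n·b ∈ ℤ^n. Then the row vector a^T admits an (n−1)-row affine TU decomposition — i.e., there exist ã ∈ {0,±1}^n, u ∈ ℤ^{n−1}, and W ∈ {0,±1}^{(n−1)×n} such that a^T = ã^T + u^T W and stacking ã^T on top of W gives a totally unimodular matrix — if and only if there exists a nonzero vector r ∈ {0,±1}^n with b^T r = 0. -/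
/-!
If `a = ã + Wᵀu` with `[ãᵀ; W]` totally unimodular and `W` has only `n - 1` rows, then `W` has a
nonzero kernel vector, and total unimodularity lets us take it in `{0, ±1}ⁿ`: after deleting
columns until those other than the first are independent, the kernel vector normalised to first
entry `1` has, by Cramer's rule on a nonsingular square submatrix, ratios of minors as entries.
For such an `r`, `2n · bᵀr = aᵀr = ãᵀr` has absolute value at most `n`, so `bᵀr = 0`.

Conversely, if `bᵀr = 0` with `r_p = ±1`, the `n - 1` rows `e_i - r_i r_p e_p` (`i ≠ p`) form a
totally unimodular matrix (an identity next to one column of signs) whose row space is `r^⊥ ∋ a`,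
so `ã = 0` works.
-/

open Matrix Set

section Sign

variable {R : Type*}

theorem range_signTypeCast_eq [Zero R] [One R] [Neg R] :
    range (SignType.cast : SignType → R) = {-1, 0, 1} := by
  rw [SignType.range_eq]
  simp [Set.insert_comm]

theorem signTypeCast_div_signTypeCast [DivisionRing R] (s t : SignType) :
    (s : R) / t = ((s * t : SignType) : R) := by
  cases t <;> simp [div_neg]

theorem mul_self_eq_one_of_mem_range_signTypeCast [Ring R] {x : R}
    (hx : x ∈ range SignType.cast) (hx0 : x ≠ 0) : x * x = 1 := by
  obtain ⟨s, rfl⟩ := hx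
  cases s <;> simp_all

theorem abs_dotProduct_le_card [Ring R] [LinearOrder R] [IsStrictOrderedRing R]
    {ι : Type*} [Fintype ι] {x y : ι → R}
    (hx : ∀ i, x i ∈ range SignType.cast) (hy : ∀ i, y i ∈ range SignType.cast) :
    |x ⬝ᵥ y| ≤ Fintype.card ι := by
  calc |x ⬝ᵥ y| ≤ ∑ i, |x i * y i| := Finset.abs_sum_le_sum_abs _ _
    _ ≤ ∑ _i : ι, (1 : R) := Finset.sum_le_sum fun i _ => by
        obtain ⟨s, hs⟩ := hx i
        obtain ⟨t, ht⟩ := hy i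
        rw [← hs, ← ht, ← SignType.coe_mul]
        cases s * t <;> simp
    _ = Fintype.card ι := by simp

end Sign

namespace Matrix

section TotallyUnimodular

variable {R : Type*} [CommRing R]

theorem IsTotallyUnimodular.map {S m n : Type*} [CommRing S] {A : Matrix m n R}
    (hA : A.IsTotallyUnimodular) (f : R →+* S) : (A.map f).IsTotallyUnimodular := by
  intro k g h hg hh
  obtain ⟨s, hs⟩ := hA k g h hg hh
  refine ⟨s, ?_⟩
  rw [submatrix_map, ← RingHom.mapMatrix_apply, ← RingHom.map_det, ← hs]
  cases s <;> simp

theorem isTotallyUnimodular_replicateCol {m : Type*} {v : m → R}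
    (hv : ∀ i, v i ∈ range SignType.cast) : (replicateCol Unit v).IsTotallyUnimodular := by
  have hrows (i : m) : ∃ j : Unit, ∃ s : SignType, replicateCol Unit v i = Pi.single j (s : R) := by
    obtain ⟨s, hs⟩ := hv i
    exact ⟨(), s, by ext; simp [hs]⟩
  exact ((emptyRows_isTotallyUnimodular (0 : Matrix Empty Unit R)).fromRows_unitlike
    fun _ => hrows).submatrix Sum.inr id

theorem zero_fromRows_isTotallyUnimodular_iff {m m' n : Type*} (A : Matrix m n R) :
    (fromRows (0 : Matrix m' n R) A).IsTotallyUnimodular ↔ A.IsTotallyUnimodular := by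
  have hswap : fromRows (0 : Matrix m' n R) A =
      (fromRows A (replicateRow m' 0)).reindex (Equiv.sumComm m m') (Equiv.refl n) := by
    ext (i | i) j <;> rfl
  rw [hswap, reindex_isTotallyUnimodular, fromRows_replicateRow0_isTotallyUnimodular_iff]

theorem add_vecMul_dotProduct_of_mulVec_eq_zero {m n : Type*} [Fintype m] [Fintype n]
    {W : Matrix m n R} {r : n → R} (hWr : W *ᵥ r = 0) (x : n → R) (u : m → R) :
    (x + u ᵥ* W) ⬝ᵥ r = x ⬝ᵥ r := by
  rw [add_dotProduct, ← dotProduct_mulVec, hWr, dotProduct_zero, add_zero]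

theorem smul_eq_cramer_mulVec {n : Type*} [Fintype n] [DecidableEq n] (A : Matrix n n R)
    (v : n → R) : A.det • v = A.cramer (A *ᵥ v) := by
  rw [cramer_eq_adjugate_mulVec, mulVec_mulVec, adjugate_mul, smul_mulVec, one_mulVec]

theorem mulVec_cons_zero {m : Type*} {N : ℕ} (V : Matrix m (Fin (N + 1)) R) (v : Fin N → R) :
    V *ᵥ Fin.cons 0 v = V.submatrix id Fin.succ *ᵥ v := by
  ext i
  simp [mulVec, dotProduct, Fin.sum_univ_succ]

end TotallyUnimodular

section Kernel

variable {K m : Type*} [Field K] [Finite m]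

theorem exists_det_submatrix_ne_zero_of_mulVec_injective {k : ℕ} (A : Matrix m (Fin k) K)
    (hA : Function.Injective A.mulVec) : ∃ f : Fin k → m, (A.submatrix f id).det ≠ 0 := by
  obtain ⟨κ, a, -, hspan, hli⟩ := exists_linearIndependent' K A.row
  have : Finite κ := hli.finite
  have : Fintype κ := Fintype.ofFinite κ
  have hcard : Fintype.card κ = k := by
    rw [linearIndependent_iff_card_eq_finrank_span.mp hli, Set.finrank, hspan,
      ← rank_eq_finrank_span_row, rank, LinearMap.finrank_range_of_inj hA, Module.finrank_fin_fun]
  let e := Fintype.equivFinOfCardEq hcard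
  refine ⟨a ∘ e.symm, ?_⟩
  rw [← isUnit_iff_ne_zero, ← isUnit_iff_isUnit_det, ← linearIndependent_rows_iff_isUnit]
  exact hli.comp e.symm e.symm.injective

theorem IsTotallyUnimodular.mem_range_signTypeCast_of_mulVec_eq_zero {N : ℕ}
    {V : Matrix m (Fin (N + 1)) K} (hV : V.IsTotallyUnimodular)
    (hinj : Function.Injective (V.submatrix id Fin.succ).mulVec) {c : Fin (N + 1) → K}
    (hVc : V *ᵥ c = 0) (hc : c 0 = 1) (i : Fin N) :
    c i.succ ∈ range SignType.cast := by
  obtain ⟨f, hf⟩ := exists_det_submatrix_ne_zero_of_mulVec_injective _ hinj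
  set B := V.submatrix f Fin.succ
  have hBc : B *ᵥ Fin.tail c = -fun q => V (f q) 0 := by
    ext q
    have := congrFun hVc (f q)
    simp only [mulVec, dotProduct, Fin.sum_univ_succ, hc, mul_one, Pi.zero_apply] at this
    simp only [B, mulVec, dotProduct, submatrix_apply, Fin.tail, Pi.neg_apply]
    linear_combination this
  have hcol : B.updateCol i (fun q => V (f q) 0) =
      V.submatrix f (Function.update Fin.succ i 0) := by
    ext p q
    rcases eq_or_ne q i with rfl | hq
    · simp [B]
    · simp [B, hq]
  -- Cramer's rule: `det B * c (i + 1)` is, up to sign, a square minor of `V`.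
  have hcramer : B.det * c i.succ = -(V.submatrix f (Function.update Fin.succ i 0)).det := by
    have := congrFun (smul_eq_cramer_mulVec B (Fin.tail c)) i
    rwa [hBc, map_neg, Pi.neg_apply, cramer_apply, hcol] at this
  obtain ⟨s, hs⟩ := (isTotallyUnimodular_iff V).mp hV N f (Function.update Fin.succ i 0)
  obtain ⟨t, ht⟩ := (isTotallyUnimodular_iff V).mp hV N f Fin.succ
  have htne : (t : K) ≠ 0 := by rw [ht]; exact hf
  refine ⟨-s * t, ?_⟩
  rw [← signTypeCast_div_signTypeCast, div_eq_iff htne, SignType.coe_neg, hs, ht, mul_comm,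
    hcramer]

theorem IsTotallyUnimodular.exists_signVector_mulVec_eq_zero {N : ℕ} {V : Matrix m (Fin N) K}
    (hV : V.IsTotallyUnimodular) {c : Fin N → K} (hc : c ≠ 0) (hVc : V *ᵥ c = 0) :
    ∃ r : Fin N → K, r ≠ 0 ∧ (∀ i, r i ∈ range SignType.cast) ∧ V *ᵥ r = 0 := by
  induction N with
  | zero => exact absurd (Subsingleton.elim c 0) hc
  | succ N ih =>
    by_cases hinj : Function.Injective (V.submatrix id Fin.succ).mulVec
    · have hc0 : c 0 ≠ 0 := fun h0 => hc <| by
        have htail : Fin.tail c = 0 := hinj <| by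
          rw [← mulVec_cons_zero, ← h0, Fin.cons_self_tail, hVc, mulVec_zero]
        rw [← Fin.cons_self_tail c, htail, h0]
        exact Fin.cons_self_tail 0
      have hVc' : V *ᵥ (c 0)⁻¹ • c = 0 := by rw [mulVec_smul, hVc, smul_zero]
      have hc1 : ((c 0)⁻¹ • c) 0 = 1 := inv_mul_cancel₀ hc0
      refine ⟨(c 0)⁻¹ • c, smul_ne_zero (inv_ne_zero hc0) hc, fun i => ?_, hVc'⟩
      exact Fin.cases ⟨1, by rw [hc1, SignType.coe_one]⟩
        (hV.mem_range_signTypeCast_of_mulVec_eq_zero hinj hVc' hc1) i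
    · obtain ⟨g, hg, hg0⟩ : ∃ g, V.submatrix id Fin.succ *ᵥ g = 0 ∧ g ≠ 0 := by
        have := mt (injective_iff_map_eq_zero (V.submatrix id Fin.succ).mulVecLin).mpr hinj
        push Not at this
        exact this
      obtain ⟨r, hr0, hr, hVr⟩ := ih (hV.submatrix id Fin.succ) hg0 hg
      refine ⟨Fin.cons 0 r, fun h => hr0 (congrArg Fin.tail h), fun i => ?_, ?_⟩
      · exact Fin.cases ⟨0, SignType.coe_zero⟩ hr i
      · rwa [mulVec_cons_zero]

end Kernel

theorem IsTotallyUnimodular.exists_signVector_mulVec_eq_zero_of_card_lt {m : Type*} [Fintype m]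
    {N : ℕ} {V : Matrix m (Fin N) ℤ} (hV : V.IsTotallyUnimodular) (hmN : Fintype.card m < N) :
    ∃ r : Fin N → ℤ, r ≠ 0 ∧ (∀ i, r i ∈ range SignType.cast) ∧ V *ᵥ r = 0 := by
  obtain ⟨c, hc, hc0⟩ := Submodule.exists_mem_ne_zero_of_ne_bot
    (LinearMap.ker_ne_bot_of_finrank_lt (f := (V.map (Int.castRingHom ℚ)).mulVecLin)
      (by simpa using hmN))
  obtain ⟨r, hr0, hr, hVr⟩ := (hV.map (Int.castRingHom ℚ)).exists_signVector_mulVec_eq_zero hc0 hc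
  choose s hs using hr
  let r' : Fin N → ℤ := fun i => s i
  have hrr' : Int.castRingHom ℚ ∘ r' = r := by ext i; simp [r', ← hs i]
  refine ⟨r', fun h => hr0 ?_, fun i => ⟨s i, rfl⟩, ?_⟩
  · rw [← hrr', h]
    ext; simp
  · ext i
    have := RingHom.map_mulVec (Int.castRingHom ℚ) V r' i
    rw [hrr', hVr, Pi.zero_apply, eq_intCast, Int.cast_eq_zero] at this
    exact this

section Pivot

variable {R : Type*} [CommRing R] {m : ℕ} (p : Fin (m + 1))

/-- Row `j` is `e_{p.succAbove j} - r_{p.succAbove j} r_p e_p`: the columns other than `p` form an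
identity matrix. -/
def pivotMatrix (r : Fin (m + 1) → R) : Matrix (Fin m) (Fin (m + 1)) R :=
  (fromCols (1 : Matrix (Fin m) (Fin m) R)
    (replicateCol Unit fun j => -(r (p.succAbove j) * r p))).submatrix id
    (p.insertNth (α := fun _ => Fin m ⊕ Unit) (Sum.inr ()) Sum.inl)

theorem isTotallyUnimodular_pivotMatrix {r : Fin (m + 1) → R}
    (hr : ∀ i, r i ∈ range SignType.cast) : (pivotMatrix p r).IsTotallyUnimodular := by
  refine ((one_fromCols_isTotallyUnimodular_iff _).mpr
    (isTotallyUnimodular_replicateCol fun j => ?_)).submatrix _ _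
  obtain ⟨s, hs⟩ := hr (p.succAbove j)
  obtain ⟨t, ht⟩ := hr p
  exact ⟨-(s * t), by simp [hs, ht]⟩

theorem vecMul_pivotMatrix (r : Fin (m + 1) → R) (u : Fin m → R) :
    u ᵥ* pivotMatrix p r = p.insertNth (-(r p * (u ⬝ᵥ p.removeNth r))) u := by
  ext i
  refine Fin.succAboveCases p ?_ (fun k => ?_) i
  · simp only [pivotMatrix, vecMul, dotProduct, submatrix_apply, Fin.insertNth_apply_same,
      fromCols_apply_inr, replicateCol_apply, Finset.mul_sum, Fin.removeNth, id,
      ← Finset.sum_neg_distrib]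
    exact Finset.sum_congr rfl fun j _ => by ring
  · simp [pivotMatrix, vecMul, dotProduct, one_apply]

theorem removeNth_vecMul_pivotMatrix {a r : Fin (m + 1) → R} (h : a ⬝ᵥ r = 0)
    (hp : r p * r p = 1) : p.removeNth a ᵥ* pivotMatrix p r = a := by
  have hsplit : a p * r p + p.removeNth a ⬝ᵥ p.removeNth r = 0 := by
    rw [← h, eq_comm, dotProduct, Fin.sum_univ_succAbove _ p]
    rfl
  rw [vecMul_pivotMatrix]
  conv_rhs => rw [← Fin.insertNth_self_removeNth p a]
  congr 1
  linear_combination (-r p) * hsplit + a p * hp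

end Pivot

end Matrix

theorem equal_sum_subsets_iff_affine_TU_decomposition_general
    (n : ℕ) (hn : 1 ≤ n) (b : Fin n → ℤ)
    (a : Fin n → ℤ) (ha : ∀ i, a i = 2 * (n : ℤ) * b i) :
    (∃ (atilde : Fin n → ℤ) (u : Fin (n - 1) → ℤ)
        (W : Matrix (Fin (n - 1)) (Fin n) ℤ),
      (∀ j, atilde j ∈ ({-1, 0, 1} : Set ℤ)) ∧
      (∀ i j, W i j ∈ ({-1, 0, 1} : Set ℤ)) ∧
      (∀ j, a j = atilde j + Matrix.vecMul u W j) ∧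
      (Matrix.fromRows (Matrix.of fun (_ : Fin 1) j => atilde j) W).IsTotallyUnimodular)
    ↔ ∃ r : Fin n → ℤ, r ≠ 0 ∧ (∀ i, r i ∈ ({-1, 0, 1} : Set ℤ)) ∧
        ∑ i, b i * r i = 0 := by
  have hab (r : Fin n → ℤ) : a ⬝ᵥ r = 2 * n * (b ⬝ᵥ r) := by
    simp only [dotProduct, ha, Finset.mul_sum, mul_assoc]
  obtain ⟨m, rfl⟩ : ∃ m, n = m + 1 := ⟨n - 1, by omega⟩
  rw [← range_signTypeCast_eq, Nat.add_sub_cancel]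
  constructor
  · rintro ⟨atilde, u, W, hatilde, -, hdecomp, hTU⟩
    have hW : W.IsTotallyUnimodular := hTU.submatrix Sum.inr id
    obtain ⟨r, hr0, hr, hWr⟩ := hW.exists_signVector_mulVec_eq_zero_of_card_lt (by simp)
    refine ⟨r, hr0, hr, ?_⟩
    have har : a ⬝ᵥ r = atilde ⬝ᵥ r := by
      rw [show a = atilde + u ᵥ* W from funext hdecomp, add_vecMul_dotProduct_of_mulVec_eq_zero hWr]
    have hlt : |a ⬝ᵥ r| < 2 * (m + 1 : ℕ) := by
      have := abs_dotProduct_le_card hatilde hr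
      rw [Fintype.card_fin] at this
      rw [har]
      omega
    have := Int.eq_zero_of_abs_lt_dvd ⟨_, hab r⟩ hlt
    rw [hab] at this
    exact (mul_eq_zero.mp this).resolve_left (by positivity)
  · rintro ⟨r, hr0, hr, hbr⟩
    obtain ⟨p, hp⟩ := Function.ne_iff.mp hr0
    have hp1 := mul_self_eq_one_of_mem_range_signTypeCast (hr p) hp
    have har : a ⬝ᵥ r = 0 := by rw [hab]; exact mul_eq_zero_of_right _ hbr
    have hW := isTotallyUnimodular_pivotMatrix p hr
    refine ⟨0, p.removeNth a, pivotMatrix p r, fun _ => ⟨0, rfl⟩, hW.apply, fun j => ?_,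
      (zero_fromRows_isTotallyUnimodular_iff _).mpr hW⟩
    rw [Pi.zero_apply, zero_add, removeNth_vecMul_pivotMatrix p har hp1]

/-- **Hardness reduction: equal-sum-subsets versus `(n-1)`-row affine TU decompositions.**
For a positive integer vector `b` and `a = 2n·b`, the row vector `aᵀ` admits an
`(n-1)`-row affine TU decomposition if and only if there exists a nonzero
`r ∈ {0,±1}ⁿ` with `bᵀ r = 0`. -/
theorem equal_sum_subsets_iff_affine_TU_decomposition
    (n : ℕ) (hn : 1 ≤ n) (b : Fin n → ℤ) (hb : ∀ i, 0 < b i)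
    (a : Fin n → ℤ) (ha : ∀ i, a i = 2 * (n : ℤ) * b i) :
    (∃ (atilde : Fin n → ℤ) (u : Fin (n - 1) → ℤ)
        (W : Matrix (Fin (n - 1)) (Fin n) ℤ),
      (∀ j, atilde j ∈ ({-1, 0, 1} : Set ℤ)) ∧
      (∀ i j, W i j ∈ ({-1, 0, 1} : Set ℤ)) ∧
      (∀ j, a j = atilde j + Matrix.vecMul u W j) ∧
      (Matrix.fromRows (Matrix.of fun (_ : Fin 1) j => atilde j) W).IsTotallyUnimodular)
    ↔ ∃ r : Fin n → ℤ, r ≠ 0 ∧ (∀ i, r i ∈ ({-1, 0, 1} : Set ℤ)) ∧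
        ∑ i, b i * r i = 0 :=
  equal_sum_subsets_iff_affine_TU_decomposition_general n hn b a ha
end

section
/- Suppose A ∈ ℤ^{m×n} admits an affine TU decomposition A = Ã + UW with W ∈ {0,±1}^{k×n} of rank k. Then there exists a unimodular matrix T ∈ ℤ^{k×k} (|det T| = 1) such that W' := T·W belongs to {0,±1}^{k×n}, contains the k×k identity matrix I_k as a submatrix (i.e., some k columns of W' form I_k), and A admits an affine TU decomposition with W': there exists U' ∈ ℤ^{m×k} such that stacking A − U'W' on top of W' gives a totally unimodular matrix. -/
/-!
Since `W` has rank `k`, some `k` columns `g` of `W` form a nonsingular submatrix `S`, and `S` has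
determinant `±1` because `W` is totally unimodular; put `T := S⁻¹`. Multiplying the stacked matrix
`[Ã; W]` on the left by the unimodular `Q = [[1, -Ã_g T], [0, T]]` gives `[Ã - Ã_g T W; T W]`,
whose columns `g` are the unit vectors of the `W`-rows. This pivot preserves total unimodularity:
bordering a square submatrix of `Q [Ã; W]` by the missing `W`-rows and their unit columns keeps its
determinant, and afterwards the row set contains the support of the rows of `Q` involved, so the
bordered submatrix is a principal submatrix of `Q` (unimodular) times a submatrix of `[Ã; W]`.
The new decomposition uses `U' = U S + Ã_g`.
-/

open Matrix Set

theorem Int.isUnit_of_mem_range_signType_cast {x : ℤ}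
    (hx : x ∈ Set.range (SignType.cast : SignType → ℤ)) (h0 : x ≠ 0) : IsUnit x := by
  obtain ⟨s, rfl⟩ := hx
  cases s <;> simp_all

theorem Int.mul_mem_range_signType_cast {u x : ℤ} (hu : IsUnit u)
    (hx : x ∈ Set.range (SignType.cast : SignType → ℤ)) : u * x ∈ Set.range SignType.cast := by
  obtain ⟨s, rfl⟩ := hx
  rcases Int.isUnit_iff.1 hu with rfl | rfl
  · exact ⟨s, by simp⟩
  · exact ⟨-s, by simp⟩

theorem Int.mem_range_signType_cast_iff {x : ℤ} :
    x ∈ Set.range (SignType.cast : SignType → ℤ) ↔ x ∈ ({-1, 0, 1} : Set ℤ) := by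
  constructor
  · rintro ⟨s, rfl⟩
    cases s <;> simp
  · rintro (rfl | rfl | rfl)
    exacts [⟨-1, rfl⟩, ⟨0, rfl⟩, ⟨1, rfl⟩]

namespace Matrix

theorem exists_injective_isUnit_submatrix_of_rank_eq_card {K m n : Type*} [Field K]
    [Fintype m] [DecidableEq m] [Fintype n] (A : Matrix m n K)
    (hA : A.rank = Fintype.card m) :
    ∃ g : m → n, Function.Injective g ∧ IsUnit (A.submatrix id g) := by
  obtain ⟨κ, a, ha, hspan, hli⟩ := exists_linearIndependent' K A.col
  have : Fintype κ := Fintype.ofInjective a ha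
  have hcard : Fintype.card κ = Fintype.card m := by
    rw [← finrank_span_eq_card hli, hspan, ← rank_eq_finrank_span_cols, hA]
  let e : m ≃ κ := (Fintype.equivOfCardEq hcard).symm
  exact ⟨a ∘ e, ha.comp e.injective, linearIndependent_cols_iff_isUnit.1 (hli.comp e e.injective)⟩

section SupportSubsetRange

variable {R ι ι' : Type*} [Fintype ι] [Fintype ι']

theorem submatrix_mul_of_support_subset_range [NonUnitalNonAssocSemiring R] {β γ : Type*}
    (Q : Matrix ι ι R) (N : Matrix ι β R) {f : ι' → ι} (hf : Function.Injective f)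
    (hQ : ∀ i x, x ∉ range f → Q (f i) x = 0) (c : γ → β) :
    (Q * N).submatrix f c = Q.submatrix f f * N.submatrix f c := by
  ext i j
  exact (Fintype.sum_of_injective f hf _ _ (fun x hx => by simp [hQ i x hx]) fun _ => rfl).symm

theorem isUnit_det_submatrix_of_support_subset_range [CommRing R] [DecidableEq ι]
    [DecidableEq ι'] {Q : Matrix ι ι R} (hQ : IsUnit Q) {f : ι' → ι} (hf : Function.Injective f)
    (hQf : ∀ i x, x ∉ range f → Q (f i) x = 0) :
    IsUnit (Q.submatrix f f).det := by
  obtain ⟨P, hQP⟩ := hQ.exists_right_inv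
  refine isUnit_det_of_right_inverse (B := P.submatrix f f) ?_
  rw [← submatrix_mul_of_support_subset_range Q P hf hQf, hQP, submatrix_one f hf]

end SupportSubsetRange

theorem IsTotallyUnimodular.mul_left_of_unit_columns {ι β κ : Type*} [Fintype ι]
    [DecidableEq ι] [Fintype κ] {M : Matrix ι β ℤ} (hM : M.IsTotallyUnimodular)
    {Q : Matrix ι ι ℤ} (hQ : IsUnit Q) {e : κ → ι} (he : Function.Injective e)
    (hQe : ∀ i x, Q i x ≠ 0 → x = i ∨ x ∈ range e) (g : κ → β)
    (hcol : ∀ i j, (Q * M) i (g j) = if i = e j then 1 else 0) :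
    (Q * M).IsTotallyUnimodular := by
  classical
  intro s f c hf _
  let κ' := {j : κ // e j ∉ range f}
  let f' : Fin s ⊕ κ' → ι := Sum.elim f (e ∘ Subtype.val)
  let c' : Fin s ⊕ κ' → β := Sum.elim c (g ∘ Subtype.val)
  have hf' : Function.Injective f' := by
    rintro (p | ⟨j, hj⟩) (q | ⟨j', hj'⟩) h
    · exact congrArg Sum.inl (hf h)
    · exact absurd ⟨p, h⟩ hj'
    · exact absurd ⟨q, h.symm⟩ hj
    · exact congrArg Sum.inr (Subtype.ext (he h))
  have hQf' : ∀ i x, x ∉ range f' → Q (f' i) x = 0 := by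
    intro i x hx
    by_contra hQx
    rcases hQe _ _ hQx with rfl | ⟨j, rfl⟩
    · exact hx ⟨i, rfl⟩
    · by_cases hj : e j ∈ range f
      · obtain ⟨p, hp⟩ := hj
        exact hx ⟨Sum.inl p, hp⟩
      · exact hx ⟨Sum.inr ⟨j, hj⟩, rfl⟩
  have hblock : (Q * M).submatrix f' c' =
      fromBlocks ((Q * M).submatrix f c) 0 ((Q * M).submatrix (e ∘ Subtype.val) c)
        (1 : Matrix κ' κ' ℤ) := by
    ext (p | ⟨j, hj⟩) (q | ⟨j', hj'⟩)
    · rfl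
    · have : f p ≠ e j' := fun h => hj' ⟨p, h⟩
      simp [f', c', hcol, this]
    · rfl
    · simp [f', c', hcol, he.eq_iff, one_apply, κ']
  have hdet : ((Q * M).submatrix f' c').det = ((Q * M).submatrix f c).det := by
    rw [hblock, det_fromBlocks_zero₁₂, det_one, mul_one]
  rw [← hdet, submatrix_mul_of_support_subset_range Q M hf' hQf', det_mul]
  exact Int.mul_mem_range_signType_cast (isUnit_det_submatrix_of_support_subset_range hQ hf' hQf')
    ((isTotallyUnimodular_iff_fintype _).1 hM _ f' c')

theorem IsTotallyUnimodular.fromRows_pivot {α κ β : Type*} [Fintype α] [DecidableEq α]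
    [Fintype κ] [DecidableEq κ] {B : Matrix α β ℤ} {W : Matrix κ β ℤ}
    (h : (fromRows B W).IsTotallyUnimodular) {T : Matrix κ κ ℤ} {g : κ → β}
    (hT : T * W.submatrix id g = 1) :
    (fromRows (B - B.submatrix id g * T * W) (T * W)).IsTotallyUnimodular := by
  let Q : Matrix (α ⊕ κ) (α ⊕ κ) ℤ := fromBlocks 1 (-(B.submatrix id g * T)) 0 T
  have hQM : Q * fromRows B W = fromRows (B - B.submatrix id g * T * W) (T * W) := by
    simp only [Q, fromBlocks_mul_fromRows, Matrix.one_mul, Matrix.zero_mul, zero_add,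
      Matrix.neg_mul, sub_eq_add_neg]
  have hTWg : ∀ a j, (T * W) a (g j) = (1 : Matrix κ κ ℤ) a j := fun a j =>
    congrFun (congrFun hT a) j
  rw [← hQM]
  refine h.mul_left_of_unit_columns ?_ Sum.inr_injective ?_ g ?_
  · rw [isUnit_iff_isUnit_det, det_fromBlocks_zero₂₁, det_one, one_mul]
    exact isUnit_det_of_right_inverse hT
  · rintro (a | a) (x | x) hQ <;> simp_all [Q, one_apply, eq_comm]
  · rw [hQM]
    rintro (a | a) j
    · have : (B.submatrix id g * T * W) a (g j) = B a (g j) := by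
        rw [Matrix.mul_assoc]
        simp [mul_apply, hTWg, one_apply]
      simp [this]
    · simp [hTWg, one_apply]

end Matrix

theorem affine_TU_decomposition_W_with_identity_submatrix_general
    {m n k : ℕ} (A : Matrix (Fin m) (Fin n) ℤ) (U : Matrix (Fin m) (Fin k) ℤ)
    (W : Matrix (Fin k) (Fin n) ℤ)
    (hrank : (W.map (Int.cast : ℤ → ℚ)).rank = k)
    (hTU : (Matrix.fromRows (A - U * W) W).IsTotallyUnimodular) :
    ∃ T : Matrix (Fin k) (Fin k) ℤ,
      (T.det = 1 ∨ T.det = -1) ∧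
      (∀ i j, (T * W) i j ∈ ({-1, 0, 1} : Set ℤ)) ∧
      (∃ g : Fin k → Fin n, Function.Injective g ∧
        (T * W).submatrix id g = (1 : Matrix (Fin k) (Fin k) ℤ)) ∧
      (∃ U' : Matrix (Fin m) (Fin k) ℤ,
        (Matrix.fromRows (A - U' * (T * W)) (T * W)).IsTotallyUnimodular) := by
  obtain ⟨g, hg, hWg⟩ := exists_injective_isUnit_submatrix_of_rank_eq_card
    (W.map (Int.cast : ℤ → ℚ)) (by rw [hrank, Fintype.card_fin])
  set S := W.submatrix id g
  have hS : IsUnit S.det := by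
    refine Int.isUnit_of_mem_range_signType_cast
      ((isTotallyUnimodular_iff_fintype _).1 hTU (Fin k) Sum.inr g) fun h0 => ?_
    rw [isUnit_iff_isUnit_det, submatrix_map, ← Int.cast_det, h0, Int.cast_zero] at hWg
    exact not_isUnit_zero hWg
  set Ã := A - U * W
  have hpivot := hTU.fromRows_pivot (nonsing_inv_mul S hS)
  refine ⟨S⁻¹, Int.isUnit_iff.1 (isUnit_nonsing_inv_det S hS), fun i j => ?_,
    ⟨g, hg, nonsing_inv_mul S hS⟩, ⟨U * S + Ã.submatrix id g, ?_⟩⟩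
  · exact Int.mem_range_signType_cast_iff.1 (hpivot.apply (Sum.inr i) j)
  · convert hpivot using 2
    rw [Matrix.add_mul, ← Matrix.mul_assoc, Matrix.mul_assoc U, mul_nonsing_inv S hS,
      Matrix.mul_one, sub_add_eq_sub_sub, Matrix.mul_assoc]

/-- **Normalizing `W` to contain an identity submatrix.**
If `A = Ã + U W` is an affine TU decomposition with `W ∈ {0,±1}^{k×n}` of rank `k`,
then there is a unimodular `T ∈ ℤ^{k×k}` such that `W' = T W` has entries in `{0,±1}`,
contains the `k×k` identity as a column submatrix, and `A` admits an affine TU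
decomposition with `W'`. -/
theorem affine_TU_decomposition_W_with_identity_submatrix
    {m n k : ℕ} (A : Matrix (Fin m) (Fin n) ℤ) (U : Matrix (Fin m) (Fin k) ℤ)
    (W : Matrix (Fin k) (Fin n) ℤ)
    (hW : ∀ i j, W i j ∈ ({-1, 0, 1} : Set ℤ))
    (hrank : (W.map (Int.cast : ℤ → ℚ)).rank = k)
    (hTU : (Matrix.fromRows (A - U * W) W).IsTotallyUnimodular) :
    ∃ T : Matrix (Fin k) (Fin k) ℤ,
      (T.det = 1 ∨ T.det = -1) ∧
      (∀ i j, (T * W) i j ∈ ({-1, 0, 1} : Set ℤ)) ∧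
      (∃ g : Fin k → Fin n, Function.Injective g ∧
        (T * W).submatrix id g = (1 : Matrix (Fin k) (Fin k) ℤ)) ∧
      (∃ U' : Matrix (Fin m) (Fin k) ℤ,
        (Matrix.fromRows (A - U' * (T * W)) (T * W)).IsTotallyUnimodular) :=
  affine_TU_decomposition_W_with_identity_submatrix_general A U W hrank hTU
end

section
/- Let n > k ≥ 1, A₁ ∈ ℤ^{m×k}, A₂ ∈ ℤ^{m×(n−k)}, and let W₂ ∈ {0,±1}^{k×(n−k)} be totally unimodular; set W = [I_k, W₂] ∈ {0,±1}^{k×n}. Then there exists U ∈ ℤ^{m×k} such that A = [A₁, A₂] admits the affine TU decomposition A = (A − UW) + UW (with the stacking of A − UW on top of W totally unimodular) if and only if the (m+k)×(n−k) matrix obtained by stacking A₂ − A₁W₂ on top of W₂ is totally unimodular. Moreover, when this holds one may take U = A₁ and A − UW = [0_{m×k}, A₂ − A₁W₂]. -/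
/-!
With `W = [I, W₂]`, stacking `A - U W` on `W` gives the block matrix
`[[A₁ - U, A₂ - U W₂], [I, W₂]]`. Subtracting `A₁ - U` times the identity rows clears the top-left
block; this is a pivot on the identity block, and pivoting preserves total unimodularity. The result
`[[0, A₂ - A₁ W₂], [I, W₂]]` has unit vectors as its first columns, so it is totally unimodular
exactly when `[A₂ - A₁ W₂; W₂]` is. Conversely, `U = A₁` clears the top-left block directly.
-/

open Matrix Set

namespace Matrix

variable {l m n o p q R α : Type*}

theorem submatrix_mul_of_forall_notMem_range [Fintype n] [Fintype o]
    [NonUnitalNonAssocSemiring R] (L : Matrix l n R) (M : Matrix n p R) (e₁ : m → l)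
    {e₂ : o → n} (e₃ : q → p) (he₂ : e₂.Injective)
    (hL : ∀ i, ∀ z ∉ range e₂, L (e₁ i) z = 0) :
    (L * M).submatrix e₁ e₃ = L.submatrix e₁ e₂ * M.submatrix e₂ e₃ := by
  ext i j
  simp only [submatrix_apply, mul_apply]
  exact (Fintype.sum_of_injective e₂ he₂ _ _ (fun z hz => by rw [hL i z hz, zero_mul])
    fun _ => rfl).symm

section CommRing

variable [CommRing R]

theorem BlockTriangular.det_submatrix_self_eq_one [Fintype o] [DecidableEq o]
    [DecidableEq n] [LinearOrder α] {M : Matrix n n R} {b : n → α} (hM : M.BlockTriangular b)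
    (hdiag : ∀ i j, b i = b j → M i j = (1 : Matrix n n R) i j) {e : o → n} (he : e.Injective) :
    (M.submatrix e e).det = 1 := by
  rw [(hM.submatrix (f := e)).det]
  refine Finset.prod_eq_one fun a _ => ?_
  have hblock : (M.submatrix e e).toSquareBlock (b ∘ e) a = 1 := by
    ext ⟨i, hi⟩ ⟨j, hj⟩
    simp only [toSquareBlock_def, of_apply, submatrix_apply, Function.comp_apply] at hi hj ⊢
    simp only [hdiag _ _ (hi.trans hj.symm), one_apply, he.eq_iff, Subtype.mk.injEq]
  rw [hblock, det_one]

theorem fromBlocks_one_neg_mul_fromBlocks_one [Fintype m] [DecidableEq m] [Fintype n]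
    [DecidableEq n] (C : Matrix m n R) (D : Matrix m o R) (W : Matrix n o R) :
    (fromBlocks 1 (-C) 0 1 : Matrix (m ⊕ n) (m ⊕ n) R) * fromBlocks C D (1 : Matrix n n R) W =
      fromBlocks 0 (D - C * W) 1 W := by
  rw [fromBlocks_multiply]
  simp [sub_eq_add_neg]

theorem IsTotallyUnimodular.fromBlocks_zero_sub_mul [Fintype m] [DecidableEq m] [Fintype n]
    [DecidableEq n] {C : Matrix m n R} {D : Matrix m o R} {W : Matrix n o R}
    (h : (fromBlocks C D (1 : Matrix n n R) W).IsTotallyUnimodular) :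
    (fromBlocks 0 (D - C * W) (1 : Matrix n n R) W).IsTotallyUnimodular := by
  classical
  intro r f g hf _
  set L : Matrix (m ⊕ n) (m ⊕ n) R := fromBlocks 1 (-C) 0 1
  set N := fromBlocks 0 (D - C * W) (1 : Matrix n n R) W
  -- Complete `f` by the pivot rows it misses and `g` by the matching pivot columns: then the
  -- row operation clearing `C` stays inside the submatrix, and the added unit columns do not
  -- change its determinant.
  let κ := {j : n // Sum.inr j ∉ range f}
  let F : Fin r ⊕ κ → m ⊕ n := Sum.elim f (Sum.inr ∘ Subtype.val)
  let G : Fin r ⊕ κ → n ⊕ o := Sum.elim g (Sum.inl ∘ Subtype.val)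
  have hF : F.Injective :=
    hf.sumElim (Sum.inr_injective.comp Subtype.val_injective) fun i j hij => j.2 ⟨i, hij⟩
  have hpivot_mem : ∀ j : n, Sum.inr j ∈ range F := fun j =>
    if hj : Sum.inr j ∈ range f then ⟨Sum.inl hj.choose, hj.choose_spec⟩
    else ⟨Sum.inr ⟨j, hj⟩, rfl⟩
  have hN : N.submatrix F G =
      fromBlocks (N.submatrix f g) 0 (N.submatrix (Sum.inr ∘ Subtype.val) g) 1 := by
    ext (i | i) (j | j)
    · rfl
    · rcases hfi : f i with a | a
      · simp [F, G, N, hfi]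
      · have : a ≠ j.1 := fun haj => j.2 ⟨i, hfi.trans (congrArg Sum.inr haj)⟩
        simp [F, G, N, hfi, one_apply_ne this]
    · rfl
    · simp only [F, G, N, submatrix_apply, Sum.elim_inr, Function.comp_apply,
        fromBlocks_apply₂₁, fromBlocks_apply₂₂, one_apply]
      exact if_congr Subtype.val_inj rfl rfl
  have hmul : N.submatrix F G = L.submatrix F F * (fromBlocks C D 1 W).submatrix F G := by
    rw [show N = L * fromBlocks C D 1 W from (fromBlocks_one_neg_mul_fromBlocks_one C D W).symm]
    refine submatrix_mul_of_forall_notMem_range _ _ _ _ hF fun i z hz => ?_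
    rcases z with a | a
    · rcases hFi : F i with b | b
      · have : b ≠ a := fun hba => hz ⟨i, hFi.trans (congrArg Sum.inl hba)⟩
        simp [L, one_apply_ne this]
      · simp [L]
    · exact absurd (hpivot_mem a) hz
  have hdetL : (L.submatrix F F).det = 1 := by
    refine (upper_two_blockTriangular 1 (-C) 1 (zero_lt_one (α := ℕ))).det_submatrix_self_eq_one
      (fun i j hij => ?_) hF
    rcases i with a | a <;> rcases j with b | b <;> simp_all [L, one_apply]
  have hdetN : (N.submatrix F G).det = (N.submatrix f g).det := by
    rw [hN, det_fromBlocks_zero₁₂, det_one, mul_one]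
  rw [← hdetN, hmul, det_mul, hdetL, one_mul]
  exact (isTotallyUnimodular_iff_fintype _).mp h _ F G

theorem fromBlocks_zero_one_isTotallyUnimodular_iff [DecidableEq m] [DecidableEq n]
    (B : Matrix m o R) (W : Matrix n o R) :
    (fromBlocks 0 B (1 : Matrix n n R) W).IsTotallyUnimodular ↔
      (fromRows B W).IsTotallyUnimodular := by
  refine ⟨fun h => ?_, fun h => ?_⟩
  · convert h.submatrix id Sum.inr using 1
    ext (i | i) j <;> rfl
  have hsub : fromBlocks 0 B (1 : Matrix n n R) W =
      (fromCols (1 : Matrix (m ⊕ n) (m ⊕ n) R) (fromRows B W)).submatrix id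
        (Sum.map Sum.inr id) := by
    ext (i | i) (j | j) <;> simp [one_apply]
  rw [hsub]
  exact h.one_fromCols.submatrix _ _

theorem fromCols_sub_mul_fromCols_one [Fintype n] [DecidableEq n] (A₁ U : Matrix m n R)
    (A₂ : Matrix m o R) (W : Matrix n o R) :
    fromCols A₁ A₂ - U * fromCols (1 : Matrix n n R) W = fromCols (A₁ - U) (A₂ - U * W) := by
  ext i (j | j) <;> simp

end CommRing

end Matrix

theorem affine_TU_decomposition_with_identity_block_iff_general
    {m k l : ℕ}
    (A₁ : Matrix (Fin m) (Fin k) ℤ) (A₂ : Matrix (Fin m) (Fin l) ℤ)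
    (W₂ : Matrix (Fin k) (Fin l) ℤ) :
    ((∃ U : Matrix (Fin m) (Fin k) ℤ,
        (Matrix.fromRows
          (Matrix.fromCols A₁ A₂
            - U * Matrix.fromCols (1 : Matrix (Fin k) (Fin k) ℤ) W₂)
          (Matrix.fromCols (1 : Matrix (Fin k) (Fin k) ℤ) W₂)).IsTotallyUnimodular)
      ↔ (Matrix.fromRows (A₂ - A₁ * W₂) W₂).IsTotallyUnimodular)
    ∧
    ((Matrix.fromRows (A₂ - A₁ * W₂) W₂).IsTotallyUnimodular →
      (Matrix.fromCols A₁ A₂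
          - A₁ * Matrix.fromCols (1 : Matrix (Fin k) (Fin k) ℤ) W₂
        = Matrix.fromCols (0 : Matrix (Fin m) (Fin k) ℤ) (A₂ - A₁ * W₂)) ∧
      (Matrix.fromRows
        (Matrix.fromCols A₁ A₂
          - A₁ * Matrix.fromCols (1 : Matrix (Fin k) (Fin k) ℤ) W₂)
        (Matrix.fromCols (1 : Matrix (Fin k) (Fin k) ℤ) W₂)).IsTotallyUnimodular) := by
  have hstack : ∀ U : Matrix (Fin m) (Fin k) ℤ,
      fromRows (fromCols A₁ A₂ - U * fromCols 1 W₂) (fromCols 1 W₂) =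
        fromBlocks (A₁ - U) (A₂ - U * W₂) 1 W₂ := fun U => by
    rw [fromCols_sub_mul_fromCols_one, fromRows_fromCols_eq_fromBlocks]
  have hresidual : fromCols A₁ A₂ - A₁ * fromCols 1 W₂ = fromCols 0 (A₂ - A₁ * W₂) := by
    rw [fromCols_sub_mul_fromCols_one, sub_self]
  have hwitness_A₁ : (fromRows (A₂ - A₁ * W₂) W₂).IsTotallyUnimodular →
      (fromRows (fromCols A₁ A₂ - A₁ * fromCols 1 W₂) (fromCols 1 W₂)).IsTotallyUnimodular := by
    rw [hstack, sub_self, fromBlocks_zero_one_isTotallyUnimodular_iff]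
    exact id
  refine ⟨⟨fun ⟨U, hU⟩ => ?_, fun h => ⟨A₁, hwitness_A₁ h⟩⟩, fun h => ⟨hresidual, hwitness_A₁ h⟩⟩
  rw [hstack] at hU
  have hpivot := hU.fromBlocks_zero_sub_mul
  rwa [show A₂ - U * W₂ - (A₁ - U) * W₂ = A₂ - A₁ * W₂ by rw [Matrix.sub_mul]; abel,
    fromBlocks_zero_one_isTotallyUnimodular_iff] at hpivot

/-- **Deciding affine TU decompositions for `W = [I_k, W₂]`.**
Let `A = [A₁, A₂]` and let `W₂ ∈ {0,±1}^{k×(n-k)}` be totally unimodular, and set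
`W = [I_k, W₂]`. Then there exists `U` such that `A = (A - U W) + U W` is an affine TU
decomposition if and only if stacking `A₂ - A₁ W₂` on top of `W₂` gives a totally
unimodular matrix; in that case one may take `U = A₁`, whence
`A - U W = [0, A₂ - A₁ W₂]`. -/
theorem affine_TU_decomposition_with_identity_block_iff
    {m k l : ℕ} (hk : 1 ≤ k) (hl : 1 ≤ l)
    (A₁ : Matrix (Fin m) (Fin k) ℤ) (A₂ : Matrix (Fin m) (Fin l) ℤ)
    (W₂ : Matrix (Fin k) (Fin l) ℤ) (hW₂ : W₂.IsTotallyUnimodular) :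
    ((∃ U : Matrix (Fin m) (Fin k) ℤ,
        (Matrix.fromRows
          (Matrix.fromCols A₁ A₂
            - U * Matrix.fromCols (1 : Matrix (Fin k) (Fin k) ℤ) W₂)
          (Matrix.fromCols (1 : Matrix (Fin k) (Fin k) ℤ) W₂)).IsTotallyUnimodular)
      ↔ (Matrix.fromRows (A₂ - A₁ * W₂) W₂).IsTotallyUnimodular)
    ∧
    ((Matrix.fromRows (A₂ - A₁ * W₂) W₂).IsTotallyUnimodular →
      (Matrix.fromCols A₁ A₂
          - A₁ * Matrix.fromCols (1 : Matrix (Fin k) (Fin k) ℤ) W₂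
        = Matrix.fromCols (0 : Matrix (Fin m) (Fin k) ℤ) (A₂ - A₁ * W₂)) ∧
      (Matrix.fromRows
        (Matrix.fromCols A₁ A₂
          - A₁ * Matrix.fromCols (1 : Matrix (Fin k) (Fin k) ℤ) W₂)
        (Matrix.fromCols (1 : Matrix (Fin k) (Fin k) ℤ) W₂)).IsTotallyUnimodular) :=
  affine_TU_decomposition_with_identity_block_iff_general A₁ A₂ W₂
end
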